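/- arXiv:2406.14851 — 4 statements merged into one kernel-verified Lean document; each statement's English description precedes it below -/
import Mathlib

section
/- For every integer n ≥ 0, the bipartition number satisfies the recursion p₂(n) = p(n/2) + Σ_{k∈ℤ∖{0}} (−1)^{k−1} p₂(n − k²), where p(n/2) is interpreted as 0 when n is odd and p₂(m) = 0 when m < 0. Equivalently, p₂(n) = p(n/2) + 2·Σ_{k≥1} (−1)^{k−1} p₂(n − k²). -/
/-- The partition number `p(n)`: the number of partitions of `n`. -/
noncomputable def partitionNumber (n : ℕ) : ℕ := Nat.card (Nat.Partition n)

/-- The bipartition number `p₂(n)`: the number of ordered pairs `(λ, μ)` of partitions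
with `|λ| + |μ| = n`. -/
noncomputable def bipartitionNumber (n : ℕ) : ℕ :=
  Nat.card {x : (Σ a : ℕ, Nat.Partition a) × (Σ b : ℕ, Nat.Partition b) // x.1.1 + x.2.1 = n}

/-- `p₂` extended to the integers, with value `0` at negative integers. -/
noncomputable def bipartitionNumberZ (m : ℤ) : ℤ := if 0 ≤ m then (bipartitionNumber m.toNat : ℤ) else 0

/-!
With `P(q) = ∑ p(n) qⁿ = 1 / (q; q)_∞` one has `P(q)² = ∑ p₂(n) qⁿ` and `P(q²) = ∑ p(n/2) qⁿ`.
Gauss's identity `θ(q) = ∑_{k ∈ ℤ} (-1)^k q^(k²) = (q²; q²)_∞ (q; q²)_∞²`, together with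
`(q; q)_∞ = (q; q²)_∞ (q²; q²)_∞`, gives `θ(q) P(q)² = 1 / (q²; q²)_∞ = P(q²)`, and the
recursion is the comparison of the coefficients of `qⁿ`.

Gauss's identity is the limit `m → ∞` of its finite form
`∑_{|k| ≤ m} (-1)^k q^(k²) [2m, m + k]_{q²} = (q; q²)_m²`, which is the `q`-binomial theorem
for `∏_{i < 2m} (q^(2m) - q^(2i+1))`. Every limit is taken as a congruence modulo a power of `q`.
-/

open Finset PowerSeries
open scoped PowerSeries.WithPiTopology

theorem neg_one_pow_natAbs_add_one {R : Type*} [Ring R] (k : ℤ) :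
    (-1 : R) ^ (k + 1).natAbs = -(-1) ^ k.natAbs := by
  rw [neg_one_pow_eq_pow_mod_two, neg_one_pow_eq_pow_mod_two (n := k.natAbs)]
  rcases Nat.mod_two_eq_zero_or_one k.natAbs with h | h <;>
    rw [h, show (k + 1).natAbs % 2 = 1 - k.natAbs % 2 by omega, h] <;> simp

section QAnalogues

variable {R : Type*} [CommRing R]

theorem dvd_mul_sub_one {d a b : R} (ha : d ∣ a - 1) (hb : d ∣ b - 1) : d ∣ a * b - 1 := by
  convert dvd_add (ha.mul_right b) hb using 1
  ring

theorem dvd_prod_sub_one {ι : Type*} {d : R} {s : Finset ι} {f : ι → R}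
    (h : ∀ i ∈ s, d ∣ f i - 1) : d ∣ ∏ i ∈ s, f i - 1 :=
  prod_induction f (fun x ↦ d ∣ x - 1) (fun _ _ ↦ dvd_mul_sub_one) (by simp) h

theorem dvd_sub_one_of_mul_eq {d x u v : R} (h : x * u = v) (hu : d ∣ u - 1) (hv : d ∣ v - 1) :
    d ∣ x - 1 := by
  convert dvd_sub hv (hu.mul_left x) using 1
  rw [← h]
  ring

/-- The `q`-Pochhammer symbol `(a; q)_n`. -/
def qPochhammer (a q : R) (n : ℕ) : R := ∏ i ∈ range n, (1 - a * q ^ i)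

theorem qPochhammer_succ (a q : R) (n : ℕ) :
    qPochhammer a q (n + 1) = qPochhammer a q n * (1 - a * q ^ n) :=
  prod_range_succ _ _

theorem map_qPochhammer {S F : Type*} [CommRing S] [FunLike F R S] [RingHomClass F R S] (f : F)
    (a q : R) (n : ℕ) : f (qPochhammer a q n) = qPochhammer (f a) (f q) n := by
  simp [qPochhammer, map_prod]

theorem qPochhammer_two_mul (q : R) (m : ℕ) :
    qPochhammer q q (2 * m) = qPochhammer q (q ^ 2) m * qPochhammer (q ^ 2) (q ^ 2) m := by
  induction m with
  | zero => simp [qPochhammer]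
  | succ m ih =>
    rw [show 2 * (m + 1) = 2 * m + 1 + 1 by ring, qPochhammer_succ, qPochhammer_succ, ih,
      qPochhammer_succ, qPochhammer_succ]
    ring

theorem exists_qPochhammer_eq_mul {a q : R} {b c : ℕ} (h : c ≤ b) :
    ∃ D, qPochhammer a q b = qPochhammer a q c * D ∧ a * q ^ c ∣ D - 1 :=
  ⟨∏ i ∈ Ico c b, (1 - a * q ^ i), (prod_range_mul_prod_Ico _ h).symm,
    dvd_prod_sub_one fun i hi ↦ by
      obtain ⟨e, rfl⟩ := Nat.exists_eq_add_of_le (mem_Ico.mp hi).1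
      exact ⟨-q ^ e, by ring⟩⟩

def gaussBinomial (q : R) : ℕ → ℕ → R
  | _, 0 => 1
  | 0, _ + 1 => 0
  | n + 1, k + 1 => gaussBinomial q n (k + 1) + q ^ (n - k) * gaussBinomial q n k

@[simp]
theorem gaussBinomial_zero_right (q : R) (n : ℕ) : gaussBinomial q n 0 = 1 := by
  cases n <;> rfl

theorem gaussBinomial_succ_succ (q : R) (n k : ℕ) :
    gaussBinomial q (n + 1) (k + 1) =
      gaussBinomial q n (k + 1) + q ^ (n - k) * gaussBinomial q n k :=
  rfl

theorem gaussBinomial_eq_zero_of_lt (q : R) : ∀ {n k : ℕ}, n < k → gaussBinomial q n k = 0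
  | 0, _ + 1, _ => rfl
  | n + 1, k + 1, h => by
    rw [gaussBinomial_succ_succ, gaussBinomial_eq_zero_of_lt q (by omega),
      gaussBinomial_eq_zero_of_lt q (by omega), mul_zero, add_zero]

theorem gaussBinomial_mul_qPochhammer (q : R) :
    ∀ {n k : ℕ}, k ≤ n →
      gaussBinomial q n k * qPochhammer q q k * qPochhammer q q (n - k) = qPochhammer q q n
  | n, 0, _ => by simp [qPochhammer]
  | n + 1, k + 1, h => by
    obtain ⟨e, rfl⟩ := Nat.exists_eq_add_of_le (Nat.le_of_succ_le_succ h)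
    have ih₀ := gaussBinomial_mul_qPochhammer q (n := k + e) (k := k) (by omega)
    rw [gaussBinomial_succ_succ, Nat.add_sub_add_right, qPochhammer_succ q q (k + e),
      qPochhammer_succ, Nat.add_sub_cancel_left] at *
    cases e with
    | zero =>
      rw [Nat.add_zero, gaussBinomial_eq_zero_of_lt q (Nat.lt_succ_self k)] at *
      linear_combination (1 - q * q ^ k) * ih₀
    | succ e =>
      have ih₁ := gaussBinomial_mul_qPochhammer q (n := k + (e + 1)) (k := k + 1) (by omega)
      rw [show k + (e + 1) - (k + 1) = e by omega] at ih₁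
      rw [qPochhammer_succ] at *
      linear_combination (1 - q * q ^ e) * ih₁ + q ^ (e + 1) * (1 - q * q ^ k) * ih₀

/-- The `q`-binomial theorem, in base `q²`. -/
theorem prod_add_mul_pow_two_mul_add_one (q x y : R) (n : ℕ) :
    ∏ i ∈ range n, (x + y * q ^ (2 * i + 1)) =
      ∑ k ∈ range (n + 1), q ^ (k ^ 2) * gaussBinomial (q ^ 2) n k * x ^ (n - k) * y ^ k := by
  induction n with
  | zero => simp
  | succ n ih =>
    set S := ∑ k ∈ range (n + 1), q ^ (k ^ 2) * gaussBinomial (q ^ 2) n k * x ^ (n - k) * y ^ k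
    have hx : S * x = ∑ k ∈ range (n + 1),
        q ^ ((k + 1) ^ 2) * gaussBinomial (q ^ 2) n (k + 1) * x ^ (n - k) * y ^ (k + 1) +
          x ^ (n + 1) := calc
      S * x = ∑ k ∈ range (n + 2),
          q ^ (k ^ 2) * gaussBinomial (q ^ 2) n k * x ^ (n + 1 - k) * y ^ k := by
        rw [sum_range_succ, gaussBinomial_eq_zero_of_lt _ (Nat.lt_succ_self n), sum_mul]
        simp only [mul_zero, zero_mul, add_zero]
        refine sum_congr rfl fun k hk ↦ ?_
        rw [Nat.sub_add_comm (Nat.le_of_lt_succ (mem_range.mp hk))]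
        ring
      _ = _ := by simp [sum_range_succ' _ (n + 1)]
    have hy : S * (y * q ^ (2 * n + 1)) = ∑ k ∈ range (n + 1),
        q ^ ((k + 1) ^ 2) * ((q ^ 2) ^ (n - k) * gaussBinomial (q ^ 2) n k) * x ^ (n - k) *
          y ^ (k + 1) := by
      rw [sum_mul]
      refine sum_congr rfl fun k hk ↦ ?_
      obtain ⟨e, rfl⟩ := Nat.exists_eq_add_of_le (Nat.le_of_lt_succ (mem_range.mp hk))
      rw [Nat.add_sub_cancel_left]
      ring
    rw [prod_range_succ, ih, mul_add, hx, hy, sum_range_succ' _ (n + 1)]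
    simp only [gaussBinomial_succ_succ, Nat.add_sub_add_right, mul_add, add_mul, sum_add_distrib,
      gaussBinomial_zero_right, Nat.sub_zero, pow_zero, ne_eq, OfNat.ofNat_ne_zero,
      not_false_eq_true, zero_pow, mul_one, one_mul]
    ring

theorem prod_pow_two_mul_sub_pow_two_mul_add_one (q : R) (m : ℕ) :
    ∏ i ∈ range (2 * m), (q ^ (2 * m) - q ^ (2 * i + 1)) =
      (-1) ^ m * q ^ (3 * m ^ 2) * qPochhammer q (q ^ 2) m ^ 2 := by
  have hodd : ∏ i ∈ range m, q ^ (2 * i + 1) = q ^ (m ^ 2) := by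
    induction m with
    | zero => simp
    | succ m ih => rw [prod_range_succ, ih]; ring
  have hlow : ∏ i ∈ range m, (q ^ (2 * m) - q ^ (2 * i + 1)) =
      (-1) ^ m * q ^ (m ^ 2) * qPochhammer q (q ^ 2) m := calc
    _ = ∏ i ∈ range m, (-1 * q ^ (2 * i + 1) * (1 - q * (q ^ 2) ^ (m - 1 - i))) := by
      refine prod_congr rfl fun i hi ↦ ?_
      obtain ⟨e, rfl⟩ := Nat.exists_eq_add_of_lt (mem_range.mp hi)
      rw [show i + e + 1 - 1 - i = e by omega]
      ring
    _ = _ := by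
      rw [prod_mul_distrib, prod_mul_distrib, prod_const, card_range, hodd, qPochhammer,
        prod_range_reflect (fun i ↦ 1 - q * (q ^ 2) ^ i)]
  have hhigh : ∏ i ∈ range m, (q ^ (2 * m) - q ^ (2 * (m + i) + 1)) =
      q ^ (2 * m ^ 2) * qPochhammer q (q ^ 2) m := calc
    _ = ∏ i ∈ range m, (q ^ (2 * m) * (1 - q * (q ^ 2) ^ i)) :=
      prod_congr rfl fun i _ ↦ by ring
    _ = _ := by rw [prod_mul_distrib, prod_const, card_range, ← pow_mul, qPochhammer]; ring
  rw [two_mul, prod_range_add, ← two_mul, hlow, hhigh]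
  ring

theorem sum_range_two_mul_add_one_eq_sum_Icc {M : Type*} [AddCommMonoid M] (f : ℕ → M)
    (m : ℕ) :
    ∑ k ∈ range (2 * m + 1), f k = ∑ j ∈ Icc (-(m : ℤ)) m, f (j + m).toNat :=
  sum_nbij' (fun k ↦ (k : ℤ) - m) (fun j ↦ (j + m).toNat)
    (fun k hk ↦ by simp only [mem_range, mem_Icc] at *; omega)
    (fun j hj ↦ by simp only [mem_range, mem_Icc] at *; omega)
    (fun k _ ↦ by omega) (fun j hj ↦ by simp only [mem_Icc] at hj; omega)
    (fun k _ ↦ by congr; omega)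

/-- Gauss's identity in finite form. -/
theorem sum_neg_one_pow_mul_gaussBinomial [IsDomain R] {q : R} (hq : q ≠ 0) (m : ℕ) :
    ∑ j ∈ Icc (-(m : ℤ)) m,
        (-1) ^ j.natAbs * q ^ (j.natAbs ^ 2) * gaussBinomial (q ^ 2) (2 * m) (j + m).toNat =
      qPochhammer q (q ^ 2) m ^ 2 := by
  have h := prod_add_mul_pow_two_mul_add_one q (q ^ (2 * m)) (-1) (2 * m)
  simp only [neg_one_mul, ← sub_eq_add_neg] at h
  rw [prod_pow_two_mul_sub_pow_two_mul_add_one, sum_range_two_mul_add_one_eq_sum_Icc] at h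
  refine mul_left_cancel₀ (by simp [hq] : (-1) ^ m * q ^ (3 * m ^ 2) ≠ 0) ?_
  rw [h, mul_sum]
  refine sum_congr rfl fun j hj ↦ ?_
  have hj := mem_Icc.mp hj
  have hsign : (-1 : R) ^ (j + m).toNat = (-1) ^ m * (-1) ^ j.natAbs := by
    rw [← pow_add, neg_one_pow_eq_pow_mod_two, neg_one_pow_eq_pow_mod_two (n := m + _)]
    congr 1
    omega
  have hexp : q ^ ((j + m).toNat ^ 2) * q ^ (2 * m * (2 * m - (j + m).toNat)) =
      q ^ (3 * m ^ 2) * q ^ (j.natAbs ^ 2) := by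
    rw [← pow_add, ← pow_add]
    congr 1
    obtain ⟨k, hk, rfl⟩ : ∃ k : ℕ, k ≤ 2 * m ∧ j = k - m :=
      ⟨(j + m).toNat, by omega, by omega⟩
    rw [show ((k : ℤ) - m + m).toNat = k by omega]
    zify [hk]
    rw [sq_abs]
    ring
  rw [hsign, ← pow_mul]
  linear_combination
    -(-1) ^ m * (-1) ^ j.natAbs * gaussBinomial (q ^ 2) (2 * m) (j + m).toNat * hexp

/-- `[n, k]_q → 1 / (q; q)_∞` as `k` and `n - k` tend to infinity. -/
theorem pow_dvd_qPochhammer_mul_gaussBinomial_sub_one {q : R} {n k m a : ℕ}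
    (hu : IsUnit (qPochhammer q q a)) (hk : k ≤ n) (hak : a ≤ k) (hank : a ≤ n - k)
    (ham : a ≤ m) : q ^ (a + 1) ∣ qPochhammer q q m * gaussBinomial q n k - 1 := by
  rw [pow_succ']
  obtain ⟨Dk, hPk, hDk⟩ := exists_qPochhammer_eq_mul (a := q) (q := q) hak
  obtain ⟨Dnk, hPnk, hDnk⟩ := exists_qPochhammer_eq_mul (a := q) (q := q) hank
  obtain ⟨Dm, hPm, hDm⟩ := exists_qPochhammer_eq_mul (a := q) (q := q) ham
  obtain ⟨Dn, hPn, hDn⟩ := exists_qPochhammer_eq_mul (a := q) (q := q) (hak.trans hk)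
  have key := gaussBinomial_mul_qPochhammer q hk
  rw [hPk, hPnk, hPn] at key
  have hcancel : gaussBinomial q n k * qPochhammer q q a * (Dk * Dnk) = Dn :=
    hu.mul_left_cancel (by linear_combination key)
  refine dvd_sub_one_of_mul_eq (u := Dk * Dnk) (v := Dm * Dn) ?_ (dvd_mul_sub_one hDk hDnk)
    (dvd_mul_sub_one hDm hDn)
  rw [hPm, ← hcancel]
  ring

noncomputable def truncatedTheta (q : R) (m : ℕ) : R :=
  ∑ j ∈ Icc (-(m : ℤ)) m, (-1) ^ j.natAbs * q ^ (j.natAbs ^ 2)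

/-- Gauss's identity `∑ (-1)^k q^(k²) = (q²; q²)_∞ (q; q²)_∞²`, modulo `q^(2m+1)`. -/
theorem pow_dvd_qPochhammer_mul_sq_sub_truncatedTheta [IsDomain R] {q : R} (hq : q ≠ 0)
    {m : ℕ} (hu : IsUnit (qPochhammer (q ^ 2) (q ^ 2) m)) :
    q ^ (2 * m + 1) ∣
      qPochhammer (q ^ 2) (q ^ 2) m * qPochhammer q (q ^ 2) m ^ 2 - truncatedTheta q m := by
  rw [← sum_neg_one_pow_mul_gaussBinomial hq, mul_sum, truncatedTheta, ← sum_sub_distrib]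
  refine dvd_sum fun j hj ↦ ?_
  have hj := mem_Icc.mp hj
  have hua : IsUnit (qPochhammer (q ^ 2) (q ^ 2) (m - j.natAbs)) :=
    isUnit_of_dvd_unit (Dvd.intro _ (prod_range_mul_prod_Ico _ (Nat.sub_le _ _))) hu
  have hterm := pow_dvd_qPochhammer_mul_gaussBinomial_sub_one hua (n := 2 * m)
    (k := (j + m).toNat) (m := m) (by omega) (by omega) (by omega) (Nat.sub_le _ _)
  have hexp : 2 * m + 1 ≤ j.natAbs ^ 2 + 2 * (m - j.natAbs + 1) := by
    have hsq : 2 * j.natAbs ≤ j.natAbs ^ 2 + 1 := by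
      rcases j.natAbs with _ | d
      · simp
      · nlinarith
    omega
  calc q ^ (2 * m + 1) ∣ q ^ (j.natAbs ^ 2) * (q ^ 2) ^ (m - j.natAbs + 1) := by
        rw [← pow_mul, ← pow_add]
        exact pow_dvd_pow q hexp
    _ ∣ (-1) ^ j.natAbs * (q ^ (j.natAbs ^ 2) * (qPochhammer (q ^ 2) (q ^ 2) m *
          gaussBinomial (q ^ 2) (2 * m) (j + m).toNat - 1)) :=
        Dvd.dvd.mul_left (mul_dvd_mul_left _ hterm) _
    _ = _ := by ring

end QAnalogues

theorem X_pow_dvd_sub_prod_of_hasProd {ι R : Type*} [CommRing R] [TopologicalSpace R]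
    [T2Space R] {f : ι → R⟦X⟧} {a : R⟦X⟧} (hf : HasProd f a) (s : Finset ι) {N : ℕ}
    (h : ∀ i ∉ s, X ^ N ∣ f i - 1) : X ^ N ∣ a - ∏ i ∈ s, f i := by
  classical
  have hclosed : IsClosed {b : R⟦X⟧ | X ^ N ∣ b - ∏ i ∈ s, f i} := by
    simp_rw [X_pow_dvd_iff, map_sub, sub_eq_zero, Set.ofPred_forall]
    exact isClosed_iInter fun m ↦ isClosed_iInter fun _ ↦
      isClosed_eq (WithPiTopology.continuous_coeff R m) continuous_const
  refine hclosed.mem_of_tendsto hf ((Filter.eventually_ge_atTop s).mono fun t hst ↦ ?_)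
  rw [Set.mem_ofPred_eq, ← prod_sdiff hst, ← sub_one_mul]
  exact (dvd_prod_sub_one fun i hi ↦ h i (mem_sdiff.mp hi).2).mul_right _

noncomputable def partitionSeries : ℤ⟦X⟧ := PowerSeries.mk fun n ↦ (partitionNumber n : ℤ)

theorem hasProd_partitionSeries :
    HasProd (fun i ↦ ∑' j, (X : ℤ⟦X⟧) ^ ((i + 1) * j)) partitionSeries := by
  have hmk :
      partitionSeries = mk fun n ↦ (#(Nat.Partition.restricted n fun _ ↦ True) : ℤ) := by
    ext n
    simp [partitionSeries, partitionNumber, Nat.Partition.restricted, Nat.card_eq_fintype_card]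
  simpa [hmk] using Nat.Partition.hasProd_powerSeriesMk_card_restricted ℤ (fun _ ↦ True)

theorem X_pow_dvd_partitionSeries_mul_qPochhammer_sub_one (N : ℕ) :
    X ^ (N + 1) ∣ partitionSeries * qPochhammer X X N - 1 := by
  have hgeom (i : ℕ) : (∑' j, (X : ℤ⟦X⟧) ^ ((i + 1) * j)) * (1 - X * X ^ i) = 1 := by
    simp_rw [pow_mul, ← pow_succ']
    exact WithPiTopology.tsum_pow_mul_one_sub_of_constantCoeff_eq_zero (by simp)
  have htrunc := X_pow_dvd_sub_prod_of_hasProd hasProd_partitionSeries (range N) (N := N + 1)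
    fun i hi ↦ by
      obtain ⟨e, rfl⟩ := Nat.exists_eq_add_of_le (by simpa using hi : N ≤ i)
      exact ⟨X ^ e * ∑' j, (X : ℤ⟦X⟧) ^ ((N + e + 1) * j),
        by linear_combination hgeom (N + e)⟩
  have hprod :
      (∏ i ∈ range N, ∑' j, (X : ℤ⟦X⟧) ^ ((i + 1) * j)) * qPochhammer X X N = 1 := by
    rw [qPochhammer, ← prod_mul_distrib]
    exact prod_eq_one fun i _ ↦ hgeom i
  convert htrunc.mul_right (qPochhammer X X N) using 1
  rw [sub_mul, hprod]

theorem X_pow_dvd_expand_partitionSeries_mul_qPochhammer_sub_one (N : ℕ) :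
    X ^ (2 * (N + 1)) ∣
      expand 2 two_ne_zero partitionSeries * qPochhammer (X ^ 2) (X ^ 2) N - 1 := by
  have := map_dvd (expand 2 two_ne_zero) (X_pow_dvd_partitionSeries_mul_qPochhammer_sub_one N)
  rwa [map_sub, map_mul, map_one, map_pow, expand_X, ← pow_mul, map_qPochhammer, expand_X] at this

theorem bipartitionNumber_eq_sum_antidiagonal (n : ℕ) :
    bipartitionNumber n = ∑ p ∈ antidiagonal n, partitionNumber p.1 * partitionNumber p.2 := by
  let e :
      {x : (Σ a : ℕ, Nat.Partition a) × (Σ b : ℕ, Nat.Partition b) // x.1.1 + x.2.1 = n} ≃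
      Σ p : antidiagonal n, Nat.Partition p.1.1 × Nat.Partition p.1.2 :=
    { toFun x := ⟨⟨(x.1.1.1, x.1.2.1), mem_antidiagonal.mpr x.2⟩, (x.1.1.2, x.1.2.2)⟩
      invFun y := ⟨(⟨_, y.2.1⟩, ⟨_, y.2.2⟩), mem_antidiagonal.mp y.1.2⟩
      left_inv _ := rfl
      right_inv _ := rfl }
  rw [bipartitionNumber, Nat.card_congr e, Nat.card_sigma, ← sum_coe_sort (antidiagonal n)]
  simp [partitionNumber]

theorem coeff_partitionSeries_sq (n : ℕ) :
    coeff n (partitionSeries ^ 2) = (bipartitionNumber n : ℤ) := by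
  simp [sq, coeff_mul, bipartitionNumber_eq_sum_antidiagonal, partitionSeries]

theorem coeff_truncatedTheta_mul_partitionSeries_sq (m n : ℕ) :
    coeff n (truncatedTheta X m * partitionSeries ^ 2) =
      ∑ j ∈ Icc (-(m : ℤ)) m, (-1) ^ j.natAbs * bipartitionNumberZ (n - j ^ 2) := by
  rw [truncatedTheta, sum_mul, map_sum]
  refine sum_congr rfl fun j _ ↦ ?_
  rw [show (-1 : ℤ⟦X⟧) ^ j.natAbs = C ((-1) ^ j.natAbs) by simp, mul_assoc, coeff_C_mul,
    coeff_X_pow_mul', bipartitionNumberZ, ← Int.natAbs_sq, ← Nat.cast_pow]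
  generalize j.natAbs ^ 2 = s
  congr 1
  split_ifs with h₁ h₂ h₂
  · rw [coeff_partitionSeries_sq, show ((n : ℤ) - s).toNat = n - s by omega]
  all_goals first | rfl | omega

theorem X_pow_dvd_truncatedTheta_mul_sq_sub_expand (n : ℕ) :
    X ^ (n + 1) ∣
      truncatedTheta X n * partitionSeries ^ 2 - expand 2 two_ne_zero partitionSeries := by
  set P := partitionSeries
  set Q := expand 2 two_ne_zero P
  set A := qPochhammer ((X : ℤ⟦X⟧) ^ 2) (X ^ 2) n
  set B := qPochhammer (X : ℤ⟦X⟧) (X ^ 2) n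
  have hA : IsUnit A := by
    rw [isUnit_iff_constantCoeff]
    simp [A, qPochhammer, map_prod]
  have hGauss := pow_dvd_qPochhammer_mul_sq_sub_truncatedTheta X_ne_zero hA
  have hP := X_pow_dvd_partitionSeries_mul_qPochhammer_sub_one (2 * n)
  rw [qPochhammer_two_mul] at hP
  have hQ := X_pow_dvd_expand_partitionSeries_mul_qPochhammer_sub_one n
  have hn₁ : (X : ℤ⟦X⟧) ^ (n + 1) ∣ X ^ (2 * n + 1) := pow_dvd_pow _ (by omega)
  have hn₂ : (X : ℤ⟦X⟧) ^ (n + 1) ∣ X ^ (2 * (n + 1)) := pow_dvd_pow _ (by omega)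
  rw [show truncatedTheta X n * P ^ 2 - Q = -P ^ 2 * (A * B ^ 2 - truncatedTheta X n) +
      Q * (P * (B * A) + 1) * (P * (B * A) - 1) - B ^ 2 * A * P ^ 2 * (Q * A - 1) by ring]
  exact dvd_sub (dvd_add ((hn₁.trans hGauss).mul_left _) ((hn₁.trans hP).mul_left _))
    ((hn₂.trans hQ).mul_left _)

theorem sum_neg_one_pow_mul_bipartitionNumberZ (n : ℕ) :
    ∑ j ∈ Icc (-(n : ℤ)) n, (-1) ^ j.natAbs * bipartitionNumberZ (n - j ^ 2) =
      if 2 ∣ n then (partitionNumber (n / 2) : ℤ) else 0 := by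
  have h := X_pow_dvd_iff.mp (X_pow_dvd_truncatedTheta_mul_sq_sub_expand n) n n.lt_succ_self
  rw [map_sub, sub_eq_zero, coeff_truncatedTheta_mul_partitionSeries_sq, coeff_expand] at h
  rw [h]
  simp [partitionSeries]

/-- Euler-type recursion for the bipartition number:
`p₂(n) = p(n/2) + ∑_{k ∈ ℤ ∖ {0}} (-1)^(k-1) p₂(n - k²)`,
where `p(n/2) = 0` for odd `n` and `p₂(m) = 0` for `m < 0`.  The sum is restricted to
`-n ≤ k ≤ n`, `k ≠ 0`, which loses nothing since `p₂(n - k²) = 0` once `k² > n`. -/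
theorem bipartitionNumber_recursion (n : ℕ) :
    (bipartitionNumber n : ℤ) =
      (if 2 ∣ n then (partitionNumber (n / 2) : ℤ) else 0) +
        ∑ k ∈ (Finset.Icc (-(n : ℤ)) (n : ℤ)).erase 0,
          (-1) ^ (k + 1).natAbs * bipartitionNumberZ ((n : ℤ) - k ^ 2) := by
  rw [← sum_neg_one_pow_mul_bipartitionNumberZ,
    ← add_sum_erase _ _ (mem_Icc.mpr ⟨by omega, by omega⟩ : (0 : ℤ) ∈ Icc (-(n : ℤ)) n)]
  simp only [neg_one_pow_natAbs_add_one, neg_mul, sum_neg_distrib]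
  simp [bipartitionNumberZ]
end

section
/- As an identity of formal power series in z, Σ_{n∈ℤ} (−1)^n z^{n²} = Π_{k=1}^∞ (1−z^k)²/(1−z^{2k}); equivalently, (Σ_{n∈ℤ} (−1)^n z^{n²}) · Π_{k=1}^∞ (1−z^{2k}) = Π_{k=1}^∞ (1−z^k)². Here Σ_{n∈ℤ} (−1)^n z^{n²} = 1 + 2Σ_{n≥1} (−1)^n z^{n²}. -/
/-!
Rothe's identity `∏_{i<n} (y - z x^i) = ∑_k (-1)^k x^(k choose 2) [n, k]_x z^k y^(n-k)` for the
Gaussian binomials, taken at `x = q²`, `y = q^(2N)`, `z = q`, gives the finite Jacobi triple product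
`∑_{k ≤ 2N} (-1)^|k-N| q^((k-N)²) [2N, k]_{q²} = ∏_{i<N} (1 - q^(2i+1))²`.
Multiplying it by `∏_{i<2N} (1 - q^(2i+2))` turns every `q^((k-N)²) [2N, k]_{q²}` into `q^((k-N)²)`
times factors `1 - q^e` with `(k-N)² + e > N`, so modulo `q^(N+1)` the left side becomes the theta
series. On the right, `∏_{i<N} (1 - q^(2i+1)) · ∏_{i<N} (1 - q^(2i+2)) = ∏_{i<2N} (1 - q^(i+1))`,
and modulo `q^(N+1)` every product may be cut off after its first `N` factors.
-/

open PowerSeries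

/-- The theta series `∑_{n ∈ ℤ} (-1)^n z^(n²) = 1 + 2 ∑_{n ≥ 1} (-1)^n z^(n²)` as a formal
power series over `ℤ`: its `m`-th coefficient is `1` for `m = 0`, `2·(-1)^n` if `m = n²` with
`n ≥ 1`, and `0` otherwise. -/
def thetaAlt : PowerSeries ℤ :=
  PowerSeries.mk fun m =>
    if m = 0 then 1 else if Nat.sqrt m ^ 2 = m then 2 * (-1 : ℤ) ^ Nat.sqrt m else 0

open Finset

theorem Finset.prod_Icc_one_eq_prod_range {M : Type*} [CommMonoid M] (f : ℕ → M) (N : ℕ) :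
    ∏ k ∈ Icc 1 N, f k = ∏ i ∈ range N, f (i + 1) := by
  rw [← Ico_add_one_right_eq_Icc, prod_Ico_eq_prod_range, add_tsub_cancel_right]
  simp only [add_comm]

theorem Finset.prod_range_two_mul {M : Type*} [CommMonoid M] (f : ℕ → M) (N : ℕ) :
    ∏ i ∈ range (2 * N), f i = (∏ i ∈ range N, f (2 * i)) * ∏ i ∈ range N, f (2 * i + 1) := by
  induction N with
  | zero => simp
  | succ N ih =>
    rw [show 2 * (N + 1) = 2 * N + 1 + 1 by ring, prod_range_succ, prod_range_succ, ih,
      prod_range_succ, prod_range_succ]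
    ac_rfl

theorem Finset.sum_range_natAbs_sub {M : Type*} [AddCommMonoid M] (f : ℕ → M) (N : ℕ) :
    ∑ k ∈ range (2 * N + 1), f ((k : ℤ) - N).natAbs = f 0 + 2 • ∑ j ∈ range N, f (j + 1) := by
  rw [show 2 * N + 1 = N + (N + 1) by ring, sum_range_add, sum_range_succ', ← sum_range_reflect]
  have hlow : ∀ j ∈ range N, f (((N - 1 - j : ℕ) : ℤ) - N).natAbs = f (j + 1) := by
    intro j hj
    rw [mem_range] at hj
    congr 1
    omega
  have hhigh : ∀ k, f (((N + k : ℕ) : ℤ) - N).natAbs = f k := fun k => by congr 1; omega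
  simp only [sum_congr rfl hlow, hhigh, two_nsmul]
  abel

theorem neg_one_pow_mul_neg_one_pow_eq_natAbs_sub {R : Type*} [Ring R] (N k : ℕ) :
    (-1 : R) ^ N * (-1) ^ k = (-1) ^ ((k : ℤ) - N).natAbs := by
  rw [← pow_add, neg_one_pow_eq_pow_mod_two, neg_one_pow_eq_pow_mod_two (n := Int.natAbs _)]
  congr 1
  omega

variable {R : Type*} [CommRing R]

def gaussianBinomial (x : R) : ℕ → ℕ → R
  | _, 0 => 1
  | 0, _ + 1 => 0
  | n + 1, k + 1 => gaussianBinomial x n k + x ^ (k + 1) * gaussianBinomial x n (k + 1)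

@[simp]
theorem gaussianBinomial_zero_right (x : R) (n : ℕ) : gaussianBinomial x n 0 = 1 := by
  cases n <;> rfl

@[simp]
theorem gaussianBinomial_zero_succ (x : R) (k : ℕ) : gaussianBinomial x 0 (k + 1) = 0 := rfl

theorem gaussianBinomial_succ_succ (x : R) (n k : ℕ) :
    gaussianBinomial x (n + 1) (k + 1) =
      gaussianBinomial x n k + x ^ (k + 1) * gaussianBinomial x n (k + 1) := rfl

theorem gaussianBinomial_eq_zero_of_lt (x : R) {n k : ℕ} (h : n < k) :
    gaussianBinomial x n k = 0 := by
  induction n generalizing k with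
  | zero =>
    obtain ⟨k, rfl⟩ := Nat.exists_eq_add_one_of_ne_zero (by omega : k ≠ 0)
    exact gaussianBinomial_zero_succ x k
  | succ n ih =>
    obtain ⟨k, rfl⟩ := Nat.exists_eq_add_one_of_ne_zero (by omega : k ≠ 0)
    rw [gaussianBinomial_succ_succ, ih (by omega), ih (by omega), mul_zero, add_zero]

@[simp]
theorem gaussianBinomial_self (x : R) (n : ℕ) : gaussianBinomial x n n = 1 := by
  induction n with
  | zero => rfl
  | succ n ih =>
    rw [gaussianBinomial_succ_succ, ih, gaussianBinomial_eq_zero_of_lt x n.lt_succ_self, mul_zero,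
      add_zero]

theorem gaussianBinomial_add_mul_prod_one_sub_pow (x : R) (k m : ℕ) :
    gaussianBinomial x (k + m) k * ∏ i ∈ range m, (1 - x ^ (i + 1)) =
      ∏ i ∈ range m, (1 - x ^ (k + i + 1)) := by
  induction k generalizing m with
  | zero => simp
  | succ k ihk =>
    induction m with
    | zero => simp
    | succ m ihm =>
      have h₁ : gaussianBinomial x (k + 1 + m) k *
            ((∏ i ∈ range m, (1 - x ^ (i + 1))) * (1 - x ^ (m + 1))) =
          (1 - x ^ (k + 1)) * ∏ i ∈ range m, (1 - x ^ (k + 1 + i + 1)) := by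
        rw [← prod_range_succ (fun i => 1 - x ^ (i + 1)), show k + 1 + m = k + (m + 1) by ring,
          ihk, prod_range_succ', mul_comm]
        congr 1
        exact prod_congr rfl fun i _ => by ring_nf
      rw [show k + 1 + (m + 1) = k + 1 + m + 1 by ring, gaussianBinomial_succ_succ, prod_range_succ,
        prod_range_succ]
      linear_combination h₁ + x ^ (k + 1) * (1 - x ^ (m + 1)) * ihm

/-- Rothe's q-binomial theorem, in homogeneous form. -/
theorem prod_range_sub_mul_pow_eq_sum_gaussianBinomial (x y z : R) (n : ℕ) :
    ∏ i ∈ range n, (y - z * x ^ i) =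
      ∑ k ∈ range (n + 1),
        (-1) ^ k * x ^ k.choose 2 * gaussianBinomial x n k * z ^ k * y ^ (n - k) := by
  induction n generalizing z with
  | zero => simp
  | succ n ih =>
    rw [prod_range_succ']
    simp_rw [pow_succ' x, ← mul_assoc z]
    rw [ih (z * x)]
    conv_rhs =>
      rw [sum_range_succ']
      simp only [gaussianBinomial_succ_succ, mul_add, add_mul, sum_add_distrib]
    set S := ∑ k ∈ range (n + 1),
      (-1) ^ k * x ^ k.choose 2 * gaussianBinomial x n k * (z * x) ^ k * y ^ (n - k)
    have hchoose : ∀ k, (k + 1).choose 2 = k.choose 2 + k := fun k => by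
      rw [Nat.choose_succ_succ', Nat.choose_one_right, add_comm]
    have hlow : ∑ k ∈ range (n + 1), (-1) ^ (k + 1) * x ^ (k + 1).choose 2 *
        gaussianBinomial x n k * z ^ (k + 1) * y ^ (n + 1 - (k + 1)) = -z * S := by
      rw [mul_sum]
      refine sum_congr rfl fun k _ => ?_
      rw [hchoose, Nat.add_sub_add_right]
      ring
    have hhigh : ∑ k ∈ range (n + 1), (-1) ^ (k + 1) * x ^ (k + 1).choose 2 *
        (x ^ (k + 1) * gaussianBinomial x n (k + 1)) * z ^ (k + 1) * y ^ (n + 1 - (k + 1)) +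
        y ^ (n + 1) = y * S := by
      rw [sum_range_succ, gaussianBinomial_eq_zero_of_lt x n.lt_succ_self, mul_sum,
        sum_range_succ']
      simp only [mul_zero, zero_mul, add_zero, gaussianBinomial_zero_right]
      congr 1
      · refine sum_congr rfl fun k hk => ?_
        rw [mem_range] at hk
        rw [Nat.add_sub_add_right, show n - k = n - (k + 1) + 1 by omega]
        ring
      · simp [pow_succ']
    simp only [pow_zero, Nat.choose_zero_succ, gaussianBinomial_zero_right, one_mul, mul_one,
      Nat.sub_zero]
    rw [hlow, add_assoc, hhigh]
    ring

theorem prod_range_pow_sub_pow_two_mul_add_one (q : R) (N : ℕ) :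
    ∏ i ∈ range N, (q ^ (2 * N) - q ^ (2 * i + 1)) =
      (-1) ^ N * q ^ (N ^ 2) * ∏ i ∈ range N, (1 - q ^ (2 * i + 1)) := by
  induction N with
  | zero => simp
  | succ N ih =>
    have hfac : ∀ i, q ^ (2 * (N + 1)) - q ^ (2 * (i + 1) + 1) =
        q ^ 2 * (q ^ (2 * N) - q ^ (2 * i + 1)) := fun i => by ring
    rw [prod_range_succ', prod_range_succ (fun i => 1 - q ^ (2 * i + 1))]
    simp only [hfac, prod_mul_distrib, prod_const, card_range, ih]
    ring

theorem prod_range_one_sub_pow_odd_mul_prod_range_one_sub_pow_even (q : R) (N : ℕ) :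
    (∏ i ∈ range N, (1 - q ^ (2 * i + 1))) * ∏ i ∈ range N, (1 - q ^ (2 * (i + 1))) =
      ∏ i ∈ range (2 * N), (1 - q ^ (i + 1)) := by
  rw [prod_range_two_mul (fun i => 1 - q ^ (i + 1))]
  rfl

namespace PowerSeries

theorem smodEq_X_pow_iff {f g : R⟦X⟧} {M : ℕ} :
    f ≡ g [SMOD Ideal.span {(X : R⟦X⟧) ^ M}] ↔ ∀ n < M, coeff n f = coeff n g := by
  simp only [SModEq.sub_mem, Ideal.mem_span_singleton, X_pow_dvd_iff, map_sub, sub_eq_zero]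

theorem prod_one_sub_X_pow_smodEq_one {ι : Type*} {s : Finset ι} {e : ι → ℕ} {M : ℕ}
    (he : ∀ i ∈ s, M ≤ e i) :
    ∏ i ∈ s, (1 - (X : R⟦X⟧) ^ e i) ≡ 1 [SMOD Ideal.span {(X : R⟦X⟧) ^ M}] := by
  conv_rhs => rw [← prod_const_one (s := s)]
  refine SModEq.prod fun i hi => ?_
  rw [SModEq.sub_mem, sub_sub_cancel_left, neg_mem_iff, Ideal.mem_span_singleton]
  exact pow_dvd_pow X (he i hi)

theorem X_pow_mul_prod_one_sub_X_pow_smodEq {ι : Type*} {s : Finset ι} {e : ι → ℕ} {E M : ℕ}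
    (he : ∀ i ∈ s, M ≤ E + e i) :
    X ^ E * ∏ i ∈ s, (1 - (X : R⟦X⟧) ^ e i) ≡ X ^ E [SMOD Ideal.span {(X : R⟦X⟧) ^ M}] := by
  have hprod : ∏ i ∈ s, (1 - (X : R⟦X⟧) ^ e i) ≡ 1 [SMOD Ideal.span {(X : R⟦X⟧) ^ (M - E)}] :=
    prod_one_sub_X_pow_smodEq_one fun i hi => by have := he i hi; omega
  rw [SModEq.sub_mem, Ideal.mem_span_singleton] at hprod ⊢
  calc (X : R⟦X⟧) ^ M ∣ X ^ E * X ^ (M - E) := by rw [← pow_add]; exact pow_dvd_pow X (by omega)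
    _ ∣ X ^ E * ∏ i ∈ s, (1 - X ^ e i) - X ^ E := by
      rw [← mul_sub_one]; exact mul_dvd_mul_left _ hprod

theorem prod_range_add_smodEq_prod_range {e : ℕ → ℕ} {M N : ℕ} (he : ∀ i, M ≤ e (N + i))
    (n : ℕ) :
    ∏ i ∈ range (N + n), (1 - (X : R⟦X⟧) ^ e i) ≡
      ∏ i ∈ range N, (1 - (X : R⟦X⟧) ^ e i) [SMOD Ideal.span {(X : R⟦X⟧) ^ M}] := by
  rw [prod_range_add]
  conv_rhs => rw [← mul_one (∏ i ∈ range N, _)]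
  exact SModEq.rfl.mul (prod_one_sub_X_pow_smodEq_one fun i _ => he i)

theorem sum_neg_one_pow_mul_X_pow_mul_gaussianBinomial (N : ℕ) :
    ∑ k ∈ range (2 * N + 1), (-1) ^ ((k : ℤ) - N).natAbs * X ^ (((k : ℤ) - N).natAbs ^ 2) *
        gaussianBinomial ((X : R⟦X⟧) ^ 2) (2 * N) k =
      (∏ i ∈ range N, (1 - X ^ (2 * i + 1))) ^ 2 := by
  -- Rothe's identity at `x = X²`, `y = X^(2N)`, `z = X` carries an extra factor `X^(3N²)`.
  apply X_pow_mul_cancel (k := 3 * N ^ 2)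
  have hprod : ∏ i ∈ range (2 * N), ((X : R⟦X⟧) ^ (2 * N) - X * (X ^ 2) ^ i) =
      (-1) ^ N * (X ^ (3 * N ^ 2) * (∏ i ∈ range N, (1 - X ^ (2 * i + 1))) ^ 2) := by
    have hhigh : ∀ i, (X : R⟦X⟧) ^ (2 * N) - X * (X ^ 2) ^ (N + i) =
        X ^ (2 * N) * (1 - X ^ (2 * i + 1)) := fun i => by ring
    have hlow : ∀ i, (X : R⟦X⟧) * (X ^ 2) ^ i = X ^ (2 * i + 1) := fun i => by ring
    rw [show range (2 * N) = range (N + N) by rw [two_mul], prod_range_add]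
    simp only [hhigh, prod_mul_distrib, prod_const, card_range]
    simp only [hlow, prod_range_pow_sub_pow_two_mul_add_one]
    ring
  have hsign : ((-1 : R⟦X⟧) ^ N) * (-1) ^ N = 1 := by rw [← mul_pow]; norm_num
  calc _ = (-1) ^ N * ∏ i ∈ range (2 * N), ((X : R⟦X⟧) ^ (2 * N) - X * (X ^ 2) ^ i) := ?_
    _ = _ := by rw [hprod, ← mul_assoc, hsign, one_mul]
  rw [prod_range_sub_mul_pow_eq_sum_gaussianBinomial, mul_sum, mul_sum]
  refine sum_congr rfl fun k hk => ?_
  have hexp : (X : R⟦X⟧) ^ (3 * N ^ 2) * X ^ (((k : ℤ) - N).natAbs ^ 2) =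
      (X ^ 2) ^ k.choose 2 * X ^ k * (X ^ (2 * N)) ^ (2 * N - k) := by
    have hk : k ≤ 2 * N := by rw [mem_range] at hk; omega
    have hchoose : 2 * k.choose 2 + k = k * k := by
      rw [Nat.choose_two_right, Nat.two_mul_div_two_of_even (Nat.even_mul_pred_self k)]
      cases k <;> simp [Nat.mul_succ]
    have hsum : 3 * N ^ 2 + ((k : ℤ) - N).natAbs ^ 2 =
        2 * k.choose 2 + k + 2 * N * (2 * N - k) := by
      zify [hk] at hchoose ⊢
      rw [sq_abs]
      linear_combination -hchoose
    rw [← pow_add, hsum]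
    ring
  rw [← neg_one_pow_mul_neg_one_pow_eq_natAbs_sub]
  linear_combination (-1) ^ N * (-1) ^ k * gaussianBinomial ((X : R⟦X⟧) ^ 2) (2 * N) k * hexp

theorem X_pow_mul_gaussianBinomial_mul_prod_smodEq {N k : ℕ} (hk : k ≤ 2 * N) :
    X ^ (((k : ℤ) - N).natAbs ^ 2) * gaussianBinomial ((X : R⟦X⟧) ^ 2) (2 * N) k *
        ∏ i ∈ range (2 * N), (1 - (X : R⟦X⟧) ^ (2 * (i + 1))) ≡
      X ^ (((k : ℤ) - N).natAbs ^ 2) [SMOD Ideal.span {(X : R⟦X⟧) ^ (N + 1)}] := by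
  obtain ⟨m, hm⟩ := Nat.exists_eq_add_of_le' hk
  simp_rw [pow_mul]
  rw [hm, prod_range_add, add_comm m k, ← mul_assoc, mul_assoc (X ^ _),
    gaussianBinomial_add_mul_prod_one_sub_pow]
  simp_rw [← pow_mul]
  -- both exponent bounds amount to `(k - N ± 1)² + N ≥ 0`
  have h₁ := X_pow_mul_prod_one_sub_X_pow_smodEq (R := R) (s := range m)
    (e := fun i => 2 * (k + i + 1)) (E := ((k : ℤ) - N).natAbs ^ 2) (M := N + 1) fun i _ => by
      zify; rw [sq_abs]; nlinarith [sq_nonneg ((k : ℤ) - N + 1)]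
  have h₂ := X_pow_mul_prod_one_sub_X_pow_smodEq (R := R) (s := range k)
    (e := fun i => 2 * (m + i + 1)) (E := ((k : ℤ) - N).natAbs ^ 2) (M := N + 1) fun i _ => by
      zify at hm ⊢; rw [sq_abs]; nlinarith [sq_nonneg ((k : ℤ) - N - 1)]
  exact (h₁.mul SModEq.rfl).trans h₂

theorem sq_prod_mul_prod_smodEq_sum (N : ℕ) :
    (∏ i ∈ range N, (1 - (X : R⟦X⟧) ^ (2 * i + 1))) ^ 2 *
        ∏ i ∈ range (2 * N), (1 - (X : R⟦X⟧) ^ (2 * (i + 1))) ≡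
      ∑ k ∈ range (2 * N + 1), (-1) ^ ((k : ℤ) - N).natAbs * X ^ (((k : ℤ) - N).natAbs ^ 2)
        [SMOD Ideal.span {(X : R⟦X⟧) ^ (N + 1)}] := by
  rw [← sum_neg_one_pow_mul_X_pow_mul_gaussianBinomial, sum_mul]
  refine SModEq.sum fun k hk => ?_
  rw [mul_assoc, mul_assoc, ← mul_assoc (X ^ _)]
  exact SModEq.rfl.mul (X_pow_mul_gaussianBinomial_mul_prod_smodEq (by
    rw [mem_range] at hk; omega))

end PowerSeries

theorem thetaAlt_smodEq_one_add_two_mul_sum (N : ℕ) :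
    thetaAlt ≡ 1 + 2 * ∑ j ∈ range N, (-1) ^ (j + 1) * X ^ ((j + 1) ^ 2)
      [SMOD Ideal.span {(X : ℤ⟦X⟧) ^ (N + 1)}] := by
  rw [smodEq_X_pow_iff]
  intro m hm
  have hC : ∀ j, (2 * ((-1) ^ j * X ^ (j ^ 2)) : ℤ⟦X⟧) = C (2 * (-1) ^ j) * X ^ (j ^ 2) := by
    intro j; simp only [map_mul, map_pow, map_neg, map_one, map_ofNat]; ring
  simp only [thetaAlt, coeff_mk, mul_sum, hC, map_add, map_sum, coeff_C_mul_X_pow, coeff_one]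
  rcases eq_or_ne m 0 with rfl | h0
  · simp [eq_comm (a := 0)]
  have hs : 1 ≤ Nat.sqrt m := Nat.sqrt_pos.2 (Nat.pos_of_ne_zero h0)
  have key : ∀ j, m = (j + 1) ^ 2 ↔ Nat.sqrt m ^ 2 = m ∧ j = Nat.sqrt m - 1 := by
    intro j
    constructor
    · rintro rfl; rw [Nat.sqrt_eq']; simp
    · rintro ⟨h, rfl⟩
      rw [Nat.sub_add_cancel hs, h]
  simp only [key, h0, if_false, zero_add]
  by_cases hsq : Nat.sqrt m ^ 2 = m
  · have hsN : Nat.sqrt m - 1 < N := by have := Nat.sqrt_le_self m; omega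
    simp [hsq, hsN, Nat.sub_add_cancel hs]
  · simp [hsq]

theorem thetaAlt_smodEq_prod (N : ℕ) :
    thetaAlt ≡ (∏ i ∈ range N, (1 - (X : ℤ⟦X⟧) ^ (2 * i + 1))) ^ 2 *
        ∏ i ∈ range (2 * N), (1 - (X : ℤ⟦X⟧) ^ (2 * (i + 1)))
      [SMOD Ideal.span {(X : ℤ⟦X⟧) ^ (N + 1)}] := by
  refine (thetaAlt_smodEq_one_add_two_mul_sum N).trans ?_
  convert (sq_prod_mul_prod_smodEq_sum N).symm using 1
  rw [sum_range_natAbs_sub (fun n => (-1) ^ n * X ^ (n ^ 2)), nsmul_eq_mul]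
  simp

theorem thetaAlt_mul_prod_smodEq (N : ℕ) :
    thetaAlt * ∏ i ∈ range N, (1 - (X : ℤ⟦X⟧) ^ (2 * (i + 1))) ≡
      (∏ i ∈ range N, (1 - (X : ℤ⟦X⟧) ^ (i + 1))) ^ 2
        [SMOD Ideal.span {(X : ℤ⟦X⟧) ^ (N + 1)}] := by
  set odd := ∏ i ∈ range N, (1 - (X : ℤ⟦X⟧) ^ (2 * i + 1))
  set even := fun n => ∏ i ∈ range n, (1 - (X : ℤ⟦X⟧) ^ (2 * (i + 1)))
  set all := fun n => ∏ i ∈ range n, (1 - (X : ℤ⟦X⟧) ^ (i + 1))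
  have heven : even (2 * N) ≡ even N [SMOD Ideal.span {(X : ℤ⟦X⟧) ^ (N + 1)}] := by
    rw [two_mul]; exact prod_range_add_smodEq_prod_range (fun i => by omega) N
  have hall : all (2 * N) ≡ all N [SMOD Ideal.span {(X : ℤ⟦X⟧) ^ (N + 1)}] := by
    rw [two_mul]; exact prod_range_add_smodEq_prod_range (fun i => by omega) N
  calc thetaAlt * even N
      ≡ odd ^ 2 * even (2 * N) * even N [SMOD Ideal.span {(X : ℤ⟦X⟧) ^ (N + 1)}] :=
        (thetaAlt_smodEq_prod N).mul SModEq.rfl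
    _ ≡ odd ^ 2 * even N * even N [SMOD Ideal.span {(X : ℤ⟦X⟧) ^ (N + 1)}] :=
        (SModEq.rfl.mul heven).mul SModEq.rfl
    _ = all (2 * N) ^ 2 := by
      simp only [odd, even, all, ← prod_range_one_sub_pow_odd_mul_prod_range_one_sub_pow_even]
      ring
    _ ≡ all N ^ 2 [SMOD Ideal.span {(X : ℤ⟦X⟧) ^ (N + 1)}] := hall.pow 2

/-- Since the `k`-th factors are `1 + O(z^k)`, the `n`-th coefficient of each infinite product
equals that of any partial product over `1 ≤ k ≤ N` with `N ≥ n`. -/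
theorem thetaAlt_eq_prod (n N : ℕ) (hnN : n ≤ N) :
    PowerSeries.coeff n
        (thetaAlt * ∏ k ∈ Finset.Icc 1 N, (1 - (PowerSeries.X : PowerSeries ℤ) ^ (2 * k))) =
      PowerSeries.coeff n
        (∏ k ∈ Finset.Icc 1 N, (1 - (PowerSeries.X : PowerSeries ℤ) ^ k) ^ 2) := by
  rw [prod_Icc_one_eq_prod_range, prod_Icc_one_eq_prod_range, prod_pow]
  exact smodEq_X_pow_iff.1 (thetaAlt_mul_prod_smodEq N) n (Nat.lt_succ_of_le hnN)
end

section
/- As an identity of formal power series in z, Σ_{n∈ℤ} z^{n²} = Π_{k=1}^∞ (1+z^{2k−1})²(1−z^{2k}). Here Σ_{n∈ℤ} z^{n²} = 1 + 2Σ_{n≥1} z^{n²}. -/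
/-!
Expanding `∏_{k<2N} (z^{2N} + z^{2k+1})` by the `q`-binomial theorem with `q = z²` (the
substitution `x = z^{1-2N}`, made homogeneous) gives the finite Jacobi triple product
`∏_{k=1}^N (1 + z^{2k-1})² = ∑_{j=0}^{2N} [2N, j]_{z²} z^{(j-N)²}`.
Multiplied by `∏_{k=1}^N (1 - z^{2k})`, the `j`-th term becomes
`z^{d²} ∏_{N+d<k≤2N} (1 - z^{2k}) ∏_{N-d<k≤N} (1 - z^{2k})` with `d = |j - N|`, which agrees
with `z^{d²}` below degree `d² + 2(N - d + 1) > 2N`. So for `n ≤ N` the `n`-th coefficient of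
the product counts the `j` with `(j - N)² = n`.
-/

open Finset PowerSeries

theorem Finset.prod_Ioc_succ_bot {M : Type*} [CommMonoid M] {a b : ℕ} (hab : a < b)
    (f : ℕ → M) :
    ∏ k ∈ Ioc a b, f k = f (a + 1) * ∏ k ∈ Ioc (a + 1) b, f k := by
  rw [← prod_Ioc_consecutive _ (Nat.le_succ a) hab, Nat.Ioc_succ_singleton, prod_singleton]

variable {R : Type*} [CommRing R]

-- For `j > m` the truncated `m - j` only ever multiplies `qBinomial q m j = 0`.
def qBinomial (q : R) : ℕ → ℕ → R
  | _, 0 => 1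
  | 0, _ + 1 => 0
  | m + 1, j + 1 => qBinomial q m (j + 1) + q ^ (m - j) * qBinomial q m j

namespace qBinomial

variable (q : R)

@[simp]
theorem zero_right (m : ℕ) : qBinomial q m 0 = 1 := by cases m <;> rfl

theorem succ_succ (m j : ℕ) :
    qBinomial q (m + 1) (j + 1) = qBinomial q m (j + 1) + q ^ (m - j) * qBinomial q m j := rfl

theorem eq_zero_of_lt : ∀ {m j : ℕ}, m < j → qBinomial q m j = 0
  | 0, _ + 1, _ => rfl
  | m + 1, j + 1, h => by
    rw [succ_succ, eq_zero_of_lt (by omega), eq_zero_of_lt (by omega), mul_zero, add_zero]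

@[simp]
theorem self (m : ℕ) : qBinomial q m m = 1 := by
  induction m with
  | zero => rfl
  | succ m ih => rw [succ_succ, eq_zero_of_lt q m.lt_succ_self, ih, Nat.sub_self]; simp

theorem mul_prod_Ioc_zero_sub : ∀ {m j : ℕ}, j ≤ m →
    qBinomial q m j * ∏ k ∈ Ioc 0 (m - j), (1 - q ^ k) = ∏ k ∈ Ioc j m, (1 - q ^ k)
  | m, 0, _ => by simp
  | m + 1, j + 1, h => by
    rcases (Nat.le_of_succ_le_succ h).lt_or_eq with hjm | rfl
    · have hpow : q ^ (m - j) * q ^ (j + 1) = q ^ (m + 1) := by rw [← pow_add]; congr 1; omega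
      have htop : ∏ k ∈ Ioc 0 (m - j), (1 - q ^ k) =
          (∏ k ∈ Ioc 0 (m - (j + 1)), (1 - q ^ k)) * (1 - q ^ (m - j)) := by
        rw [show m - j = m - (j + 1) + 1 by omega]; exact prod_Ioc_succ_top (Nat.zero_le _) _
      rw [Nat.add_sub_add_right, succ_succ, add_mul, mul_assoc, mul_prod_Ioc_zero_sub hjm.le,
        htop, ← mul_assoc, mul_prod_Ioc_zero_sub hjm, prod_Ioc_succ_bot hjm,
        prod_Ioc_succ_top (by omega)]
      linear_combination -(∏ k ∈ Ioc (j + 1) m, (1 - q ^ k)) * hpow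
    · simp

theorem mul_prod_Ioc_zero : ∀ {m j : ℕ}, j ≤ m →
    qBinomial q m j * ∏ k ∈ Ioc 0 j, (1 - q ^ k) = ∏ k ∈ Ioc (m - j) m, (1 - q ^ k)
  | m, 0, _ => by simp
  | m + 1, j + 1, h => by
    rcases (Nat.le_of_succ_le_succ h).lt_or_eq with hjm | rfl
    · have hpow : q ^ (m - j) * q ^ (j + 1) = q ^ (m + 1) := by rw [← pow_add]; congr 1; omega
      have hbot : ∏ k ∈ Ioc (m - (j + 1)) m, (1 - q ^ k) =
          (1 - q ^ (m - j)) * ∏ k ∈ Ioc (m - j) m, (1 - q ^ k) := by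
        rw [show m - j = m - (j + 1) + 1 by omega]; exact prod_Ioc_succ_bot (by omega) _
      rw [Nat.add_sub_add_right, succ_succ, add_mul, mul_prod_Ioc_zero hjm, hbot,
        prod_Ioc_succ_top (Nat.zero_le _), ← mul_assoc, mul_assoc (q ^ _),
        mul_prod_Ioc_zero hjm.le, prod_Ioc_succ_top (by omega)]
      linear_combination -(∏ k ∈ Ioc (m - j) m, (1 - q ^ k)) * hpow
    · simp

end qBinomial

theorem prod_range_add_pow_mul_eq_sum_qBinomial (q x y : R) (m : ℕ) :
    ∏ k ∈ range m, (y + q ^ k * x) =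
      ∑ j ∈ range (m + 1), qBinomial q m j * q ^ j.choose 2 * x ^ j * y ^ (m - j) := by
  induction m with
  | zero => simp
  | succ m ih =>
    set T : ℕ → R := fun j => q ^ j.choose 2 * x ^ j * y ^ (m + 1 - j) with hT
    have hterm : ∀ j ∈ range (m + 1),
        qBinomial q m j * q ^ j.choose 2 * x ^ j * y ^ (m - j) * (y + q ^ m * x) =
          qBinomial q m j * T j + q ^ (m - j) * qBinomial q m j * T (j + 1) := by
      intro j hj
      have hj : j ≤ m := Nat.lt_succ_iff.mp (mem_range.mp hj)
      have hq : q ^ j.choose 2 * q ^ m = q ^ (m - j) * q ^ (j + 1).choose 2 := by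
        have hc : (j + 1).choose 2 = j + j.choose 2 := by
          rw [Nat.choose_succ_succ', Nat.choose_one_right]
        rw [← pow_add, ← pow_add, hc]; congr 1; omega
      have hy : y ^ (m - j) * y = y ^ (m + 1 - j) := by
        rw [← pow_succ]; congr 1; omega
      simp only [hT, Nat.add_sub_add_right]
      linear_combination qBinomial q m j * x ^ j * (y ^ (m - j) * x * hq + q ^ j.choose 2 * hy)
    have hshift : ∑ j ∈ range (m + 1), qBinomial q m (j + 1) * T (j + 1) + T 0 =
        ∑ j ∈ range (m + 1), qBinomial q m j * T j := by
      rw [sum_range_succ' (fun j => qBinomial q m j * T j), qBinomial.zero_right, one_mul,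
        sum_range_succ, qBinomial.eq_zero_of_lt q m.lt_succ_self, zero_mul, add_zero]
    calc ∏ k ∈ range (m + 1), (y + q ^ k * x)
        = ∑ j ∈ range (m + 1), qBinomial q m j * T j +
            ∑ j ∈ range (m + 1), q ^ (m - j) * qBinomial q m j * T (j + 1) := by
          rw [prod_range_succ, ih, sum_mul, sum_congr rfl hterm, sum_add_distrib]
      _ = ∑ j ∈ range (m + 1), qBinomial q (m + 1) (j + 1) * T (j + 1) +
            qBinomial q (m + 1) 0 * T 0 := by
          simp only [← hshift, qBinomial.succ_succ, add_mul, sum_add_distrib, qBinomial.zero_right]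
          ring
      _ = _ := by
          rw [sum_range_succ' _ (m + 1)]
          simp only [hT, mul_assoc]

theorem prod_range_two_mul_pow_add_eq (z : R) (N : ℕ) :
    ∏ k ∈ range (2 * N), (z ^ (2 * N) + (z ^ 2) ^ k * z) =
      z ^ (3 * N ^ 2) * ∏ k ∈ Icc 1 N, (1 + z ^ (2 * k - 1)) ^ 2 := by
  have hodd : ∏ k ∈ range N, z ^ (2 * k + 1) = z ^ (N ^ 2) := by
    induction N with
    | zero => simp
    | succ N ih => rw [prod_range_succ, ih, ← pow_add]; congr 1; ring
  have hlow : ∀ k ∈ range N,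
      z ^ (2 * N) + (z ^ 2) ^ k * z = z ^ (2 * k + 1) * (1 + z ^ (2 * (N - 1 - k) + 1)) := by
    intro k hk
    rw [mul_add, mul_one, ← pow_add, ← pow_mul, ← pow_succ, add_comm]
    congr 2; have := mem_range.mp hk; omega
  have hhigh : ∀ k ∈ range N,
      z ^ (2 * N) + (z ^ 2) ^ (N + k) * z = z ^ (2 * N) * (1 + z ^ (2 * k + 1)) := by
    intro k _
    rw [mul_add, mul_one, ← pow_mul, ← pow_succ, ← pow_add]
    congr 2; ring
  have hIcc : ∏ k ∈ Icc 1 N, (1 + z ^ (2 * k - 1)) = ∏ k ∈ range N, (1 + z ^ (2 * k + 1)) := by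
    rw [← Ico_add_one_right_eq_Icc, prod_Ico_eq_prod_range, Nat.add_sub_cancel]
    exact prod_congr rfl fun k _ => by congr 2; omega
  rw [show range (2 * N) = range (N + N) by rw [two_mul], prod_range_add, prod_congr rfl hlow,
    prod_congr rfl hhigh, prod_mul_distrib, prod_mul_distrib, prod_const, card_range, hodd,
    prod_range_reflect (fun k => 1 + z ^ (2 * k + 1)), prod_pow, hIcc]
  ring

theorem two_mul_choose_two_add_self (n : ℕ) : 2 * n.choose 2 + n = n ^ 2 := by
  induction n with
  | zero => rfl
  | succ n ih => rw [Nat.choose_succ_succ', Nat.choose_one_right]; linear_combination ih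

theorem sq_add_two_mul_mul_sub_eq (N j : ℕ) (hj : j ≤ 2 * N) :
    j ^ 2 + 2 * N * (2 * N - j) = 3 * N ^ 2 + Nat.dist j N ^ 2 := by
  have hdist : (Nat.dist j N : ℤ) ^ 2 = ((j : ℤ) - N) ^ 2 := by
    rcases le_total j N with h | h
    · rw [Nat.dist_eq_sub_of_le h, Nat.cast_sub h]; ring
    · rw [Nat.dist_eq_sub_of_le_right h, Nat.cast_sub h]
  zify [hj]
  rw [hdist]
  ring

theorem prod_Icc_one_add_pow_sq_eq_sum_qBinomial [NoZeroDivisors R] {z : R} (hz : z ≠ 0)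
    (N : ℕ) :
    ∏ k ∈ Icc 1 N, (1 + z ^ (2 * k - 1)) ^ 2 =
      ∑ j ∈ range (2 * N + 1), qBinomial (z ^ 2) (2 * N) j * z ^ (Nat.dist j N ^ 2) := by
  refine mul_left_cancel₀ (pow_ne_zero (3 * N ^ 2) hz) ?_
  rw [← prod_range_two_mul_pow_add_eq, prod_range_add_pow_mul_eq_sum_qBinomial, mul_sum]
  refine sum_congr rfl fun j hj => ?_
  have hexp := sq_add_two_mul_mul_sub_eq N j (Nat.lt_succ_iff.mp (mem_range.mp hj))
  rw [← two_mul_choose_two_add_self] at hexp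
  calc _ = qBinomial (z ^ 2) (2 * N) j * z ^ (2 * j.choose 2 + j + 2 * N * (2 * N - j)) := by
        rw [pow_add, pow_add, pow_mul, pow_mul]; ring
    _ = _ := by rw [hexp, pow_add]; ring

theorem pow_dvd_prod_one_sub_pow_sub_one (x : R) {m : ℕ} {s : Finset ℕ} (h : ∀ k ∈ s, m ≤ k) :
    x ^ m ∣ ∏ k ∈ s, (1 - x ^ k) - 1 := by
  refine prod_induction _ (fun p => x ^ m ∣ p - 1) (fun a b ha hb => ?_) (by simp) fun k hk => ?_
  · rw [show a * b - 1 = a * (b - 1) + (a - 1) by ring]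
    exact dvd_add (dvd_mul_of_dvd_right hb a) ha
  · rw [sub_sub_cancel_left]
    exact (pow_dvd_pow x (h k hk)).neg_right

theorem qBinomial_two_mul_mul_prod_Ioc (q : R) {N i : ℕ} (hi : i ≤ 2 * N) :
    qBinomial q (2 * N) i * ∏ k ∈ Ioc 0 N, (1 - q ^ k) =
      (∏ k ∈ Ioc (N + Nat.dist i N) (2 * N), (1 - q ^ k)) *
        ∏ k ∈ Ioc (N - Nat.dist i N) N, (1 - q ^ k) := by
  rcases le_total i N with h | h
  · rw [Nat.dist_eq_sub_of_le h, show N - (N - i) = i by omega,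
      show N + (N - i) = 2 * N - i by omega, ← prod_Ioc_consecutive _ (Nat.zero_le i) h,
      ← mul_assoc, qBinomial.mul_prod_Ioc_zero q hi]
  · rw [Nat.dist_eq_sub_of_le_right h, show N - (i - N) = 2 * N - i by omega,
      show N + (i - N) = i by omega,
      ← prod_Ioc_consecutive _ (Nat.zero_le (2 * N - i)) (by omega), ← mul_assoc,
      qBinomial.mul_prod_Ioc_zero_sub q hi]

theorem coeff_qBinomial_mul_prod_mul_X_pow {n N i : ℕ} (hn : n ≤ N) (hi : i ≤ 2 * N) :
    coeff n (qBinomial (X ^ 2 : R⟦X⟧) (2 * N) i * (∏ k ∈ Ioc 0 N, (1 - (X ^ 2) ^ k)) *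
      X ^ (Nat.dist i N ^ 2)) = coeff n (X ^ (Nat.dist i N ^ 2) : R⟦X⟧) := by
  set d := Nat.dist i N
  have hd : d ≤ N := by unfold d Nat.dist; omega
  rw [qBinomial_two_mul_mul_prod_Ioc _ hi, ← sub_eq_zero, ← map_sub]
  refine X_pow_dvd_iff.mp ?_ n n.lt_succ_self
  set A := ∏ k ∈ Ioc (N + d) (2 * N), (1 - ((X : R⟦X⟧) ^ 2) ^ k)
  set B := ∏ k ∈ Ioc (N - d) N, (1 - ((X : R⟦X⟧) ^ 2) ^ k)
  have hA : X ^ (n + 1) ∣ A - 1 := by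
    refine (pow_dvd_pow X (by omega : n + 1 ≤ 2 * (N + d + 1))).trans ?_
    rw [pow_mul]
    exact pow_dvd_prod_one_sub_pow_sub_one _ fun k hk => (mem_Ioc.mp hk).1
  have hB : X ^ (n + 1) ∣ (B - 1) * X ^ (d ^ 2) := by
    have : 2 * d ≤ d ^ 2 + 1 := by simpa using two_mul_le_add_sq d 1
    refine (pow_dvd_pow X (by omega : n + 1 ≤ 2 * (N - d + 1) + d ^ 2)).trans ?_
    rw [pow_add, pow_mul]
    exact mul_dvd_mul_right
      (pow_dvd_prod_one_sub_pow_sub_one _ fun k hk => (mem_Ioc.mp hk).1) _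
  rw [show A * B * X ^ (d ^ 2) - X ^ (d ^ 2) =
    (A - 1) * (B * X ^ (d ^ 2)) + (B - 1) * X ^ (d ^ 2) by ring]
  exact dvd_add (dvd_mul_of_dvd_left hA _) hB

/-- The theta series `∑_{n ∈ ℤ} z^(n²) = 1 + 2 ∑_{n ≥ 1} z^(n²)` as a formal power series
over `ℤ`: its `m`-th coefficient is `1` for `m = 0`, `2` if `m = n²` with `n ≥ 1`, and `0`
otherwise. -/
def thetaPlus : PowerSeries ℤ :=
  PowerSeries.mk fun m => if m = 0 then 1 else if Nat.sqrt m ^ 2 = m then 2 else 0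

theorem coeff_thetaPlus_eq_card {n N : ℕ} (hn : n ≤ N) :
    coeff n thetaPlus = #{i ∈ range (2 * N + 1) | n = Nat.dist i N ^ 2} := by
  rw [thetaPlus, coeff_mk]
  by_cases hsq : Nat.sqrt n ^ 2 = n
  · set s := Nat.sqrt n
    have hfilter : {i ∈ range (2 * N + 1) | n = Nat.dist i N ^ 2} = {N - s, N + s} := by
      have hsN : s ≤ N := (Nat.le_self_pow two_ne_zero s).trans (hsq ▸ hn)
      ext i
      rw [mem_filter, mem_range, mem_insert, mem_singleton, ← hsq, eq_comm,
        Nat.pow_left_inj two_ne_zero]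
      unfold Nat.dist
      omega
    rw [hfilter]
    rcases eq_or_ne s 0 with hs | hs
    · simp [← hsq, hs]
    · rw [if_neg (by rw [← hsq]; positivity), if_pos hsq, card_pair (by omega)]
      rfl
  · have hempty : {i ∈ range (2 * N + 1) | n = Nat.dist i N ^ 2} = ∅ :=
      filter_false_of_mem fun i _ h => hsq (by rw [h, Nat.sqrt_eq'])
    rw [if_neg (by rintro rfl; exact hsq rfl), if_neg hsq, hempty, card_empty, Nat.cast_zero]

-- Since the `k`-th factor is `1 + O(z^(2k-1))`, the `n`-th coefficient of the infinite product
-- equals that of any partial product over `1 ≤ k ≤ N` with `N ≥ n`.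
/-- `∑_{n ∈ ℤ} z^(n²) = ∏_{k ≥ 1} (1 + z^(2k-1))² (1 - z^(2k))` as formal power series in
`z`.  The identity is expressed coefficient-by-coefficient: since the `k`-th factor is
`1 + O(z^(2k-1))`, the `n`-th coefficient of the infinite product equals that of any partial
product over `1 ≤ k ≤ N` with `N ≥ n`. -/
theorem thetaPlus_eq_prod (n N : ℕ) (hnN : n ≤ N) :
    PowerSeries.coeff n thetaPlus =
      PowerSeries.coeff n
        (∏ k ∈ Finset.Icc 1 N,
          (1 + (PowerSeries.X : PowerSeries ℤ) ^ (2 * k - 1)) ^ 2 *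
            (1 - (PowerSeries.X : PowerSeries ℤ) ^ (2 * k))) := by
  have hpoch : ∏ k ∈ Icc 1 N, (1 - X ^ (2 * k) : ℤ⟦X⟧) = ∏ k ∈ Ioc 0 N, (1 - (X ^ 2) ^ k) := by
    simp_rw [← Icc_add_one_left_eq_Ioc, zero_add, ← pow_mul]
  rw [prod_mul_distrib, prod_Icc_one_add_pow_sq_eq_sum_qBinomial X_ne_zero, hpoch, sum_mul,
    map_sum, coeff_thetaPlus_eq_card hnN, ← sum_boole]
  refine sum_congr rfl fun i hi => ?_
  rw [mul_right_comm,
    coeff_qBinomial_mul_prod_mul_X_pow hnN (Nat.lt_succ_iff.mp (mem_range.mp hi)), coeff_X_pow]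
end

section
/- For every nonnegative integer n, |Φ_n⁺| − |Φ_n⁻| = p(n/2), where Φ_n⁺ is the set of similarity classes of symbols of rank n whose defect is congruent to 0 mod 4, Φ_n⁻ is the set of similarity classes of symbols of rank n whose defect is congruent to 2 mod 4, and p(n/2) is interpreted as 0 when n is odd. -/
/-!
Every similarity class contains exactly one reduced symbol, i.e. one whose rows do not both
contain `0` (undo shifts as long as possible), so both cardinalities count reduced symbols of
rank `n`. Moving the largest element of `A ∆ B` to the other row is an involution of the
reduced symbols with `A ≠ B` which preserves the rank and changes the defect by `±2`; it
matches defect `≡ 0` with defect `≡ 2 (mod 4)`. What remains are the symbols `(A, A)` with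
`0 ∉ A`, of rank `2 (Σ A - (0 + 1 + ⋯ + (|A| - 1)))`; subtracting this staircase from the sorted
elements of `A` turns them into the partitions of `n / 2`.
-/

/-- A symbol in the sense of Lusztig: an ordered pair `(A, B)` of finite sets of
nonnegative integers. -/
structure LusztigSymbol where
  A : Finset ℕ
  B : Finset ℕ

namespace LusztigSymbol

/-- The rank of a symbol: `Σ_{a ∈ A} a + Σ_{b ∈ B} b − ⌊(|A|+|B|−1)²/4⌋`. -/
def rank (Λ : LusztigSymbol) : ℤ :=
  (∑ a ∈ Λ.A, (a : ℤ)) + (∑ b ∈ Λ.B, (b : ℤ)) -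
    ((Λ.A.card : ℤ) + (Λ.B.card : ℤ) - 1) ^ 2 / 4

/-- The defect of a symbol: `|A| − |B|`. -/
def defect (Λ : LusztigSymbol) : ℤ := (Λ.A.card : ℤ) - (Λ.B.card : ℤ)

/-- The elementary shift step generating the similarity relation: each row gets all its
entries increased by `1`, and then `0` is adjoined to each row. -/
def Step (Λ Λ' : LusztigSymbol) : Prop :=
  Λ'.A = insert 0 (Λ.A.image (· + 1)) ∧ Λ'.B = insert 0 (Λ.B.image (· + 1))

/-- The quotient of the set of symbols by the similarity relation (the equivalence relation
generated by the shift step); its elements are the similarity classes of symbols. -/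
def SimClass : Type := Quotient (Relation.EqvGen.setoid Step)

/-- The similarity class of a symbol. -/
def simClass (Λ : LusztigSymbol) : SimClass := Quotient.mk (Relation.EqvGen.setoid Step) Λ

end LusztigSymbol

open Finset
open scoped symmDiff

attribute [ext] LusztigSymbol

lemma Finset.two_mul_sum_range_natCast {R : Type*} [CommRing R] (m : ℕ) :
    2 * ∑ i ∈ range m, (i : R) = m * (m - 1) := by
  induction m with
  | zero => simp
  | succ m ih => rw [sum_range_succ, mul_add, ih]; push_cast; ring

lemma Finset.card_mul_le_two_mul_sum_of_le (A : Finset ℕ) {c : ℕ} (hc : ∀ a ∈ A, c ≤ a) :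
    (#A : ℤ) * (#A - 1 + 2 * c) ≤ 2 * ∑ a ∈ A, (a : ℤ) := by
  have h := sum_range_le_sum (s := A.map Nat.castEmbedding) (c := c) (by simpa using hc)
  rw [sum_map, card_map, sum_add_distrib, sum_const, card_range, nsmul_eq_mul] at h
  simp only [Nat.castEmbedding_apply] at h
  linarith [two_mul_sum_range_natCast (R := ℤ) #A]

lemma Finset.sum_symmDiff_singleton {α M : Type*} [DecidableEq α] [AddCommGroup M]
    (S : Finset α) (x : α) (f : α → M) :
    ∑ a ∈ S ∆ {x}, f a = ∑ a ∈ S, f a + if x ∈ S then -f x else f x := by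
  split_ifs with hx
  · have : S ∆ {x} = S.erase x := by ext; simp [mem_symmDiff]; grind
    rw [this, ← sum_erase_add _ _ hx, add_neg_cancel_right]
  · have : S ∆ {x} = insert x S := by ext; simp [mem_symmDiff]; grind
    rw [this, sum_insert hx, add_comm]

lemma Multiset.sort_coe_of_pairwise {α : Type*} [LinearOrder α] {l : List α}
    (h : l.Pairwise (· ≤ ·)) : Multiset.sort (l : Multiset α) = l :=
  List.mergeSort_eq_self _ h

lemma Finset.sort_toFinset_of_pairwise {α : Type*} [LinearOrder α] {l : List α}
    (h : l.Pairwise (· < ·)) : l.toFinset.sort = l :=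
  (List.toFinset_sort _ h.nodup).mpr (h.imp le_of_lt)

lemma Finset.sum_sort {α : Type*} [LinearOrder α] [AddCommMonoid α] (A : Finset α) :
    A.sort.sum = ∑ a ∈ A, a := by
  rw [← Multiset.sum_coe, sort_eq, sum_eq_multiset_sum, Multiset.map_id']

namespace List

def stairUp (l : List ℕ) : List ℕ := l.mapIdx fun i a => a + i

def stairDown (l : List ℕ) : List ℕ := l.mapIdx fun i a => a - i

variable {l : List ℕ}

@[simp] lemma length_stairUp (l : List ℕ) : l.stairUp.length = l.length := length_mapIdx

@[simp] lemma length_stairDown (l : List ℕ) : l.stairDown.length = l.length := length_mapIdx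

lemma stairDown_stairUp (l : List ℕ) : l.stairUp.stairDown = l :=
  ext_getElem (by simp) fun i _ _ => by simp [stairUp, stairDown]

lemma getElem_add_le_getElem_add (h : l.Pairwise (· < ·)) {i j : ℕ} (hij : i ≤ j)
    (hj : j < l.length) : l[i] + j ≤ l[j] + i := by
  induction j, hij using Nat.le_induction with
  | base => rfl
  | succ j hij ih =>
    have := pairwise_iff_getElem.mp h j (j + 1) (by omega) hj (by omega)
    have := ih (by omega)
    omega

lemma stairUp_stairDown (h : l.Pairwise (· < ·)) : l.stairDown.stairUp = l :=
  ext_getElem (by simp) fun i hi _ => by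
    have := getElem_add_le_getElem_add h (Nat.zero_le i) (by simpa using hi)
    simp only [stairUp, stairDown, getElem_mapIdx]
    omega

lemma pairwise_lt_stairUp (h : l.Pairwise (· ≤ ·)) : l.stairUp.Pairwise (· < ·) := by
  refine pairwise_iff_getElem.mpr fun i j hi hj hij => ?_
  have := pairwise_iff_getElem.mp h i j (by simpa using hi) (by simpa using hj) hij
  simp only [stairUp, getElem_mapIdx]
  omega

lemma pairwise_le_stairDown (h : l.Pairwise (· < ·)) : l.stairDown.Pairwise (· ≤ ·) := by
  refine pairwise_iff_getElem.mpr fun i j hi hj hij => ?_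
  have := getElem_add_le_getElem_add h hij.le (by simpa using hj)
  simp only [stairDown, getElem_mapIdx]
  omega

lemma zero_mem_stairUp_iff (h : l.Pairwise (· ≤ ·)) : 0 ∈ l.stairUp ↔ 0 ∈ l := by
  rw [stairUp, mem_mapIdx, mem_iff_getElem]
  constructor
  · rintro ⟨i, hi, h0⟩
    exact ⟨i, hi, by omega⟩
  · rintro ⟨j, hj, h0⟩
    have : l[0] ≤ l[j] := by
      rcases j.eq_zero_or_pos with rfl | hj0
      · rfl
      · exact pairwise_iff_getElem.mp h 0 j _ hj hj0
    exact ⟨0, by omega, by omega⟩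

lemma sum_stairUp (l : List ℕ) : l.stairUp.sum = l.sum + ∑ i ∈ Finset.range l.length, i := by
  rw [stairUp, mapIdx_eq_ofFn, sum_ofFn, Finset.sum_add_distrib, ← Fin.sum_univ_eq_sum_range,
    ← sum_ofFn, ofFn_get]

end List

def Nat.Partition.stairEquiv (k : ℕ) :
    {A : Finset ℕ // 0 ∉ A ∧ ∑ a ∈ A, a = k + ∑ i ∈ range #A, i} ≃ Nat.Partition k where
  toFun A :=
    have hsorted := (sortedLT_sort A.1).pairwise
    { parts := A.1.sort.stairDown
      parts_pos := fun {i} hi => by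
        have hzero := List.zero_mem_stairUp_iff (List.pairwise_le_stairDown hsorted)
        rw [List.stairUp_stairDown hsorted, mem_sort] at hzero
        have : i ≠ 0 := by rintro rfl; exact A.2.1 (hzero.mpr (by simpa using hi))
        omega
      parts_sum := by
        have hsum := List.sum_stairUp A.1.sort.stairDown
        rw [List.stairUp_stairDown hsorted, sum_sort, List.length_stairDown, length_sort,
          A.2.2] at hsum
        rw [Multiset.sum_coe]
        omega }
  invFun p :=
    have hsorted := List.pairwise_lt_stairUp (Multiset.pairwise_sort p.parts (· ≤ ·))
    ⟨p.parts.sort.stairUp.toFinset, by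
      rw [List.mem_toFinset, List.zero_mem_stairUp_iff (Multiset.pairwise_sort _ _),
        Multiset.mem_sort]
      exact fun h => (p.parts_pos h).false, by
      rw [List.sum_toFinset _ hsorted.nodup, List.map_id',
        List.toFinset_card_of_nodup hsorted.nodup, List.sum_stairUp, List.length_stairUp,
        ← Multiset.sum_coe, Multiset.sort_eq, p.parts_sum, Multiset.length_sort]⟩
  left_inv A := by
    have hsorted := (sortedLT_sort A.1).pairwise
    ext1
    dsimp only
    rw [Multiset.sort_coe_of_pairwise (List.pairwise_le_stairDown hsorted),
      List.stairUp_stairDown hsorted, sort_toFinset]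
  right_inv p := by
    ext1
    dsimp only
    rw [sort_toFinset_of_pairwise (List.pairwise_lt_stairUp (Multiset.pairwise_sort _ _)),
      List.stairDown_stairUp, Multiset.sort_eq]

namespace LusztigSymbol

def shiftRow (S : Finset ℕ) : Finset ℕ := insert 0 (S.image (· + 1))

def unshiftRow (S : Finset ℕ) : Finset ℕ := (S.erase 0).image (· - 1)

lemma unshiftRow_shiftRow (S : Finset ℕ) : unshiftRow (shiftRow S) = S := by
  ext x
  simp [unshiftRow, shiftRow]

lemma shiftRow_unshiftRow {S : Finset ℕ} (h : 0 ∈ S) : shiftRow (unshiftRow S) = S := by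
  ext x
  simp only [shiftRow, unshiftRow, image_image, mem_insert, mem_image, mem_erase,
    Function.comp_apply]
  constructor
  · rintro (rfl | ⟨a, ⟨ha0, haS⟩, rfl⟩)
    · exact h
    · rwa [Nat.sub_add_cancel (Nat.pos_of_ne_zero ha0)]
  · intro hx
    rcases Nat.eq_zero_or_pos x with rfl | hx0
    · exact Or.inl rfl
    · exact Or.inr ⟨x, ⟨hx0.ne', hx⟩, Nat.sub_add_cancel hx0⟩

lemma card_shiftRow (S : Finset ℕ) : #(shiftRow S) = #S + 1 := by
  rw [shiftRow, card_insert_of_notMem (by simp),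
    card_image_of_injective _ (add_left_injective 1)]

lemma sum_shiftRow (S : Finset ℕ) :
    ∑ a ∈ shiftRow S, (a : ℤ) = ∑ a ∈ S, (a : ℤ) + #S := by
  rw [shiftRow, sum_insert (by simp), sum_image fun _ _ _ _ h => add_right_cancel h]
  simp [sum_add_distrib]

lemma card_unshiftRow_lt {S : Finset ℕ} (h : 0 ∈ S) : #(unshiftRow S) < #S :=
  card_image_le.trans_lt (card_erase_lt_of_mem h)

def shift (Λ : LusztigSymbol) : LusztigSymbol := ⟨shiftRow Λ.A, shiftRow Λ.B⟩

def unshift (Λ : LusztigSymbol) : LusztigSymbol := ⟨unshiftRow Λ.A, unshiftRow Λ.B⟩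

lemma step_iff_eq_shift {Λ Λ' : LusztigSymbol} : Step Λ Λ' ↔ Λ' = shift Λ := by
  rw [LusztigSymbol.ext_iff]
  rfl

lemma rank_shift (Λ : LusztigSymbol) : rank (shift Λ) = rank Λ := by
  simp only [rank, shift, sum_shiftRow, card_shiftRow]
  push_cast
  have hsq : ((#Λ.A : ℤ) + 1 + (#Λ.B + 1) - 1) ^ 2
      = (#Λ.A + #Λ.B - 1) ^ 2 + (#Λ.A + #Λ.B) * 4 := by ring
  rw [hsq, Int.add_mul_ediv_right _ _ (by norm_num)]
  ring

lemma defect_shift (Λ : LusztigSymbol) : defect (shift Λ) = defect Λ := by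
  simp only [defect, shift, card_shiftRow]
  push_cast
  ring

lemma eq_of_eqvGen_step {α : Sort*} {f : LusztigSymbol → α} (hf : ∀ Λ, f (shift Λ) = f Λ)
    {Λ Λ' : LusztigSymbol} (h : Relation.EqvGen Step Λ Λ') : f Λ = f Λ' := by
  induction h with
  | rel x y hxy => rw [step_iff_eq_shift.mp hxy, hf]
  | refl => rfl
  | symm _ _ _ ih => exact ih.symm
  | trans _ _ _ _ _ ih₁ ih₂ => exact ih₁.trans ih₂

/-- The symbols that are not shifts. -/
def Reduced (Λ : LusztigSymbol) : Prop := ¬(0 ∈ Λ.A ∧ 0 ∈ Λ.B)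

/-- The reduced representative of the similarity class of `Λ`. -/
def reduce (Λ : LusztigSymbol) : LusztigSymbol :=
  if _ : 0 ∈ Λ.A ∧ 0 ∈ Λ.B then reduce (unshift Λ) else Λ
termination_by #Λ.A
decreasing_by exact card_unshiftRow_lt ‹0 ∈ Λ.A ∧ 0 ∈ Λ.B›.1

lemma reduce_of_reduced {Λ : LusztigSymbol} (h : Reduced Λ) : reduce Λ = Λ := by
  rw [reduce, dif_neg h]

lemma reduce_shift (Λ : LusztigSymbol) : reduce (shift Λ) = reduce Λ := by
  rw [reduce, dif_pos (by simp [shift, shiftRow])]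
  congr 1
  ext1 <;> exact unshiftRow_shiftRow _

lemma reduced_reduce (Λ : LusztigSymbol) : Reduced (reduce Λ) := by
  rw [reduce]
  split_ifs with h
  · exact reduced_reduce (unshift Λ)
  · exact h
termination_by #Λ.A
decreasing_by exact card_unshiftRow_lt h.1

lemma eqvGen_reduce (Λ : LusztigSymbol) : Relation.EqvGen Step (reduce Λ) Λ := by
  rw [reduce]
  split_ifs with h
  · refine (eqvGen_reduce (unshift Λ)).trans _ _ _ (.rel _ _ (step_iff_eq_shift.mpr ?_))
    ext1
    exacts [(shiftRow_unshiftRow h.1).symm, (shiftRow_unshiftRow h.2).symm]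
  · exact .refl _
termination_by #Λ.A
decreasing_by exact card_unshiftRow_lt h.1

lemma simClass_eq_simClass_iff {Λ Λ' : LusztigSymbol} :
    simClass Λ = simClass Λ' ↔ reduce Λ = reduce Λ' := by
  refine ⟨fun h => eq_of_eqvGen_step reduce_shift (Quotient.exact h), fun h => ?_⟩
  have hΛ' := eqvGen_reduce Λ'
  rw [← h] at hΛ'
  exact Quotient.sound (((eqvGen_reduce Λ).symm _ _).trans _ _ _ hΛ')

theorem card_simClass_eq_card_reduced (P : LusztigSymbol → Prop)
    (hP : ∀ Λ, P (shift Λ) ↔ P Λ) :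
    Nat.card {c : SimClass // ∃ Λ, simClass Λ = c ∧ P Λ} =
      Nat.card {Λ : LusztigSymbol // Reduced Λ ∧ P Λ} := by
  have hP_reduce (Λ : LusztigSymbol) : P (reduce Λ) ↔ P Λ :=
    iff_of_eq (eq_of_eqvGen_step (fun Λ => propext (hP Λ)) (eqvGen_reduce Λ))
  refine (Nat.card_eq_of_bijective (fun Λ => ⟨simClass Λ.1, Λ.1, rfl, Λ.2.2⟩) ⟨?_, ?_⟩).symm
  · intro ⟨Λ, hΛ, _⟩ ⟨Λ', hΛ', _⟩ h
    have := simClass_eq_simClass_iff.mp (congrArg Subtype.val h)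
    rw [reduce_of_reduced hΛ, reduce_of_reduced hΛ'] at this
    exact Subtype.ext this
  · rintro ⟨c, Λ, rfl, hPΛ⟩
    refine ⟨⟨reduce Λ, reduced_reduce Λ, (hP_reduce Λ).mpr hPΛ⟩, Subtype.ext ?_⟩
    exact Quotient.sound (eqvGen_reduce Λ)

lemma card_simClass_rank_defect (n r : ℤ) :
    Nat.card {c : SimClass // ∃ Λ, simClass Λ = c ∧ rank Λ = n ∧ defect Λ % 4 = r} =
      Nat.card {Λ : LusztigSymbol // Reduced Λ ∧ rank Λ = n ∧ defect Λ % 4 = r} :=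
  card_simClass_eq_card_reduced _ fun Λ => by rw [rank_shift, defect_shift]

lemma card_add_card_le_of_reduced {Λ : LusztigSymbol} (hΛ : Reduced Λ) :
    (#Λ.A + #Λ.B : ℤ) ≤ 2 * rank Λ + 1 := by
  have hq := Int.ediv_mul_le (((#Λ.A : ℤ) + #Λ.B - 1) ^ 2) (b := 4) (by norm_num)
  have hnonneg (S : Finset ℕ) : (#S : ℤ) * (#S - 1) ≤ 2 * ∑ a ∈ S, (a : ℤ) := by
    simpa using card_mul_le_two_mul_sum_of_le S (c := 0) (by simp)
  have hpos (S : Finset ℕ) (h0 : 0 ∉ S) : (#S : ℤ) * (#S + 1) ≤ 2 * ∑ a ∈ S, (a : ℤ) := by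
    have := card_mul_le_two_mul_sum_of_le S (c := 1)
      fun a ha => Nat.one_le_iff_ne_zero.mpr fun h => h0 (h ▸ ha)
    push_cast at this
    linarith
  unfold rank
  rcases not_and_or.mp hΛ with h0 | h0
  · nlinarith [hpos _ h0, hnonneg Λ.B, sq_nonneg ((#Λ.A : ℤ) - #Λ.B + 1)]
  · nlinarith [hpos _ h0, hnonneg Λ.A, sq_nonneg ((#Λ.B : ℤ) - #Λ.A + 1)]

lemma le_of_mem_of_reduced {Λ : LusztigSymbol} (hΛ : Reduced Λ) {x : ℕ}
    (hx : x ∈ Λ.A ∪ Λ.B) : (x : ℤ) ≤ rank Λ + (2 * rank Λ + 1) ^ 2 := by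
  have hcard := card_add_card_le_of_reduced hΛ
  have hpos : (1 : ℤ) ≤ #Λ.A + #Λ.B := by
    rcases mem_union.mp hx with h | h
    · linarith [card_pos.mpr ⟨x, h⟩]
    · linarith [card_pos.mpr ⟨x, h⟩]
  have hq := Int.ediv_le_self 4 (sq_nonneg ((#Λ.A : ℤ) + #Λ.B - 1))
  have hsum : (x : ℤ) ≤ ∑ a ∈ Λ.A, (a : ℤ) + ∑ b ∈ Λ.B, (b : ℤ) := by
    have hA : 0 ≤ ∑ a ∈ Λ.A, (a : ℤ) := by positivity
    have hB : 0 ≤ ∑ b ∈ Λ.B, (b : ℤ) := by positivity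
    rcases mem_union.mp hx with h | h
    · linarith [single_le_sum (fun i _ => Int.natCast_nonneg i) h]
    · linarith [single_le_sum (fun i _ => Int.natCast_nonneg i) h]
  unfold rank at hcard ⊢
  nlinarith

lemma finite_reduced_rank_eq (n : ℤ) :
    {Λ : LusztigSymbol | Reduced Λ ∧ rank Λ = n}.Finite := by
  set N := (n + (2 * n + 1) ^ 2).toNat + 1
  refine (((range N).powerset ×ˢ (range N).powerset).finite_toSet.image
    fun p : Finset ℕ × Finset ℕ => (⟨p.1, p.2⟩ : LusztigSymbol)).subset ?_
  rintro Λ ⟨hΛ, rfl⟩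
  have hbound (x : ℕ) (hx : x ∈ Λ.A ∪ Λ.B) : x ∈ range N := by
    have := le_of_mem_of_reduced hΛ hx
    rw [mem_range]
    omega
  simp only [Set.mem_image, coe_product, Set.mem_prod, coe_powerset, Set.mem_preimage,
    Set.mem_powerset_iff, coe_subset]
  exact ⟨(Λ.A, Λ.B), ⟨fun x hx => hbound x (mem_union_left _ hx),
    fun x hx => hbound x (mem_union_right _ hx)⟩, rfl⟩

/-- Moves `x` to the other row, provided it lies in exactly one of them. -/
def toggle (x : ℕ) (Λ : LusztigSymbol) : LusztigSymbol := ⟨Λ.A ∆ {x}, Λ.B ∆ {x}⟩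

lemma toggle_toggle (x : ℕ) (Λ : LusztigSymbol) : toggle x (toggle x Λ) = Λ := by
  ext1 <;> exact symmDiff_symmDiff_cancel_right _ _

lemma symmDiff_toggle (x : ℕ) (Λ : LusztigSymbol) :
    (toggle x Λ).A ∆ (toggle x Λ).B = Λ.A ∆ Λ.B := by
  simp only [toggle, symmDiff_symmDiff_symmDiff_comm, symmDiff_self, symmDiff_bot]

lemma rank_toggle {x : ℕ} {Λ : LusztigSymbol} (hx : x ∈ Λ.A ∆ Λ.B) :
    rank (toggle x Λ) = rank Λ := by
  simp only [rank, toggle, Finset.cast_card, sum_symmDiff_singleton]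
  rcases mem_symmDiff.mp hx with ⟨hA, hB⟩ | ⟨hB, hA⟩ <;>
    simp only [hA, hB, if_true, if_false] <;> ring_nf

lemma defect_toggle {x : ℕ} {Λ : LusztigSymbol} (hx : x ∈ Λ.A ∆ Λ.B) :
    defect (toggle x Λ) = defect Λ - 2 ∨ defect (toggle x Λ) = defect Λ + 2 := by
  simp only [defect, toggle, Finset.cast_card, sum_symmDiff_singleton]
  rcases mem_symmDiff.mp hx with ⟨hA, hB⟩ | ⟨hB, hA⟩ <;> simp only [hA, hB, if_true, if_false]
  · left; ring
  · right; ring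

lemma reduced_toggle_iff {x : ℕ} {Λ : LusztigSymbol} (hx : x ∈ Λ.A ∆ Λ.B) :
    Reduced (toggle x Λ) ↔ Reduced Λ := by
  simp only [Reduced, toggle, mem_symmDiff, mem_singleton] at hx ⊢
  grind

/-- Toggling does not change `Λ.A ∆ Λ.B`, so toggling its largest element is an involution. -/
def tau (Λ : LusztigSymbol) : LusztigSymbol :=
  if h : (Λ.A ∆ Λ.B).Nonempty then toggle ((Λ.A ∆ Λ.B).max' h) Λ else Λ

lemma tau_of_eq {Λ : LusztigSymbol} (h : Λ.A = Λ.B) : tau Λ = Λ := by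
  simp [tau, h]

lemma exists_tau_eq_toggle {Λ : LusztigSymbol} (h : Λ.A ≠ Λ.B) :
    ∃ x ∈ Λ.A ∆ Λ.B, tau Λ = toggle x Λ :=
  have hne : (Λ.A ∆ Λ.B).Nonempty := symmDiff_nonempty.mpr h
  ⟨_, max'_mem _ hne, dif_pos hne⟩

lemma tau_involutive : Function.Involutive tau := by
  intro Λ
  by_cases h : Λ.A = Λ.B
  · rw [tau_of_eq h, tau_of_eq h]
  · have hne : (Λ.A ∆ Λ.B).Nonempty := symmDiff_nonempty.mpr h
    simp only [tau, dif_pos hne, symmDiff_toggle, toggle_toggle]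

lemma card_reduced_defect_zero_ne_eq (n : ℤ) :
    Nat.card {Λ : LusztigSymbol // (Reduced Λ ∧ rank Λ = n ∧ defect Λ % 4 = 0) ∧ Λ.A ≠ Λ.B} =
      Nat.card {Λ : LusztigSymbol // Reduced Λ ∧ rank Λ = n ∧ defect Λ % 4 = 2} := by
  refine Nat.card_congr ((tau_involutive.toPerm tau).subtypeEquiv fun Λ => ?_)
  simp only [Function.Involutive.coe_toPerm]
  by_cases h : Λ.A = Λ.B
  · have : defect Λ = 0 := by rw [defect, h, sub_self]
    simp [tau_of_eq h, h, this]
  · obtain ⟨x, hx, hτ⟩ := exists_tau_eq_toggle h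
    rw [hτ, reduced_toggle_iff hx, rank_toggle hx]
    have hd := defect_toggle hx
    constructor
    · rintro ⟨⟨hr, hn, h0⟩, -⟩
      exact ⟨hr, hn, by omega⟩
    · rintro ⟨hr, hn, h2⟩
      exact ⟨⟨hr, hn, by omega⟩, h⟩

lemma card_reduced_defect_zero (n : ℤ) :
    Nat.card {Λ : LusztigSymbol // Reduced Λ ∧ rank Λ = n ∧ defect Λ % 4 = 0} =
      Nat.card {Λ : LusztigSymbol // (Reduced Λ ∧ rank Λ = n ∧ defect Λ % 4 = 0) ∧ Λ.A = Λ.B} +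
        Nat.card {Λ : LusztigSymbol // Reduced Λ ∧ rank Λ = n ∧ defect Λ % 4 = 2} := by
  rw [← card_reduced_defect_zero_ne_eq]
  exact (Set.ncard_inter_add_ncard_sdiff_eq_ncard _ {Λ : LusztigSymbol | Λ.A = Λ.B}
    ((finite_reduced_rank_eq n).subset fun Λ h => ⟨h.1, h.2.1⟩)).symm

lemma rank_diag (A : Finset ℕ) :
    rank ⟨A, A⟩ = 2 * (∑ a ∈ A, (a : ℤ) - ∑ i ∈ range #A, (i : ℤ)) := by
  have hsq : ((#A : ℤ) + #A - 1) ^ 2 = 1 + (#A * (#A - 1)) * 4 := by ring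
  rw [rank, hsq, Int.add_mul_ediv_right _ _ (by norm_num), ← two_mul_sum_range_natCast]
  norm_num
  ring

lemma rank_diag_eq_two_mul_iff {A : Finset ℕ} {k : ℕ} :
    rank ⟨A, A⟩ = 2 * k ↔ ∑ a ∈ A, a = k + ∑ i ∈ range #A, i := by
  rw [rank_diag, ← Nat.cast_sum, ← Nat.cast_sum]
  omega

def reducedDiagEquiv (n : ℤ) :
    {Λ : LusztigSymbol // (Reduced Λ ∧ rank Λ = n ∧ defect Λ % 4 = 0) ∧ Λ.A = Λ.B} ≃
      {A : Finset ℕ // 0 ∉ A ∧ rank ⟨A, A⟩ = n} where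
  toFun Λ := ⟨Λ.1.A, by
    obtain ⟨⟨A, B⟩, ⟨hr, hn, -⟩, hAB : A = B⟩ := Λ
    subst hAB
    exact ⟨fun h0 => hr ⟨h0, h0⟩, hn⟩⟩
  invFun A := ⟨⟨A, A⟩, ⟨by simpa [Reduced] using A.2.1, A.2.2, by simp [defect]⟩, rfl⟩
  left_inv Λ := Subtype.ext (LusztigSymbol.ext rfl Λ.2.2)
  right_inv _ := rfl

lemma card_reduced_diag (n : ℕ) :
    Nat.card {Λ : LusztigSymbol // (Reduced Λ ∧ rank Λ = n ∧ defect Λ % 4 = 0) ∧ Λ.A = Λ.B} =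
      if 2 ∣ n then partitionNumber (n / 2) else 0 := by
  rw [Nat.card_congr (reducedDiagEquiv n)]
  split_ifs with h
  · obtain ⟨k, rfl⟩ := h
    rw [partitionNumber, Nat.mul_div_cancel_left k two_pos,
      ← Nat.card_congr (Nat.Partition.stairEquiv k)]
    push_cast
    simp_rw [rank_diag_eq_two_mul_iff]
  · rw [Nat.card_eq_zero]
    refine Or.inl ⟨fun ⟨A, _, hA⟩ => h ?_⟩
    rw [rank_diag] at hA
    omega

end LusztigSymbol

open LusztigSymbol in
/-- `|Φ_n⁺| − |Φ_n⁻| = p(n/2)`, where `Φ_n⁺` (resp. `Φ_n⁻`) is the set of similarity classes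
of symbols of rank `n` whose defect is `≡ 0 (mod 4)` (resp. `≡ 2 (mod 4)`), and `p(n/2)` is
interpreted as `0` when `n` is odd. -/
theorem card_simClasses_defect_mod_four (n : ℕ) :
    (Nat.card {c : SimClass // ∃ Λ, simClass Λ = c ∧ rank Λ = n ∧ defect Λ % 4 = 0} : ℤ) -
      (Nat.card {c : SimClass // ∃ Λ, simClass Λ = c ∧ rank Λ = n ∧ defect Λ % 4 = 2} : ℤ) =
      if 2 ∣ n then (partitionNumber (n / 2) : ℤ) else 0 := by
  rw [card_simClass_rank_defect, card_simClass_rank_defect, card_reduced_defect_zero,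
    card_reduced_diag]
  split_ifs <;> push_cast <;> ring
end
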